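/- arXiv:2412.00116 — 14 statements merged into one kernel-verified Lean document; each statement's English description precedes it below -/
import Mathlib

section
/- Let σ = (σ_1 < ... < σ_k) and τ = (τ_1 < ... < τ_ℓ) be strictly increasing tuples of positive integers with k < ℓ, and set σ_0 = 0. Let m = max{1 ≤ i ≤ k+1 : σ_{i−1} < τ_i}. Then the tuples σ̄ and τ̄ defined by σ̄_i = σ_i for i < m, σ̄_i = τ_i for m ≤ i ≤ ℓ, and τ̄_i = τ_i for i < m, τ̄_i = σ_i for m ≤ i ≤ k, are both strictly increasing. -/
/-!
Both spliced tuples are increasing away from the junction between positions `m - 1` and `m`,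
since there they follow a single increasing tuple. At the junction of `σ̄` the inequality
`σ_{m-1} < τ_m` is the defining property of `m`. At the junction of `τ̄` one needs
`τ_{m-1} < σ_m`: maximality of `m` gives `τ_{m+1} ≤ σ_m`, and `τ_{m-1} < τ_m < τ_{m+1}`.
-/

namespace Stmt3

def splice {α : Type*} (m : ℕ) (a b : ℕ → α) (i : ℕ) : α :=
  if i < m then a i else b i

theorem splice_lt_splice_succ {α : Type*} [LT α] {a b : ℕ → α} {m i : ℕ}
    (ha : i + 1 < m → a i < a (i + 1)) (hjoin : i + 1 = m → a i < b (i + 1))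
    (hb : m ≤ i → b i < b (i + 1)) :
    splice m a b i < splice m a b (i + 1) := by
  unfold splice
  rcases lt_trichotomy (i + 1) m with h | h | h
  · rw [if_pos (by omega), if_pos h]
    exact ha h
  · rw [if_pos (by omega), if_neg (by omega)]
    exact hjoin h
  · rw [if_neg (by omega), if_neg (by omega)]
    exact hb (by omega)

theorem le_of_maximal_join {k m : ℕ} {σ τ : ℕ → ℕ} (hmk : m ≤ k)
    (hmax : ∀ i, 1 ≤ i → i ≤ k + 1 → σ (i - 1) < τ i → i ≤ m) :
    τ (m + 1) ≤ σ m := by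
  by_contra! h
  have := hmax (m + 1) (by omega) (by omega) (by simpa using h)
  omega

theorem stmt3_general (k ℓ m : ℕ) (σ τ : ℕ → ℕ) (hkl : k < ℓ)
    (hσmono : ∀ i, 1 ≤ i → i < k → σ i < σ (i + 1))
    (hτmono : ∀ i, 1 ≤ i → i < ℓ → τ i < τ (i + 1))
    (hm : 1 ≤ m ∧ m ≤ k + 1 ∧ σ (m - 1) < τ m)
    (hmax : ∀ i, 1 ≤ i → i ≤ k + 1 → σ (i - 1) < τ i → i ≤ m) :
    (∀ i, 1 ≤ i → i < ℓ →
      (if i < m then σ i else τ i) < (if i + 1 < m then σ (i + 1) else τ (i + 1))) ∧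
    (∀ i, 1 ≤ i → i < k →
      (if i < m then τ i else σ i) < (if i + 1 < m then τ (i + 1) else σ (i + 1))) := by
  obtain ⟨-, hmk, hστ⟩ := hm
  refine ⟨fun i hi hiℓ => splice_lt_splice_succ ?_ ?_ ?_,
    fun i hi hik => splice_lt_splice_succ ?_ ?_ ?_⟩
  · exact fun h => hσmono i hi (by omega)
  · rintro rfl
    simpa using hστ
  · exact fun _ => hτmono i hi hiℓ
  · exact fun h => hτmono i hi (by omega)
  · rintro rfl
    calc τ i < τ (i + 1) := hτmono i hi (by omega)
      _ < τ (i + 2) := hτmono (i + 1) (by omega) (by omega)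
      _ ≤ σ (i + 1) := le_of_maximal_join (by omega) hmax
  · exact fun _ => hσmono i hi hik

/-- Elementary splice: given column tuples `σ = (σ_1 < ... < σ_k)` and
`τ = (τ_1 < ... < τ_ℓ)` of positive integers with `k < ℓ`, with the convention
`σ_0 = 0`, and `m = max {1 ≤ i ≤ k+1 : σ_{i−1} < τ_i}`, the spliced tuples
`σ̄` (with `σ̄_i = σ_i` for `i < m`, `τ_i` for `m ≤ i ≤ ℓ`) and
`τ̄` (with `τ̄_i = τ_i` for `i < m`, `σ_i` for `m ≤ i ≤ k`) are both strictly
increasing. -/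
theorem stmt3 (k ℓ m : ℕ) (σ τ : ℕ → ℕ) (hkl : k < ℓ)
    (hσ0 : σ 0 = 0)
    (hσmono : ∀ i, 1 ≤ i → i < k → σ i < σ (i + 1))
    (hσpos : ∀ i, 1 ≤ i → i ≤ k → 0 < σ i)
    (hτmono : ∀ i, 1 ≤ i → i < ℓ → τ i < τ (i + 1))
    (hτpos : ∀ i, 1 ≤ i → i ≤ ℓ → 0 < τ i)
    (hm : 1 ≤ m ∧ m ≤ k + 1 ∧ σ (m - 1) < τ m)
    (hmax : ∀ i, 1 ≤ i → i ≤ k + 1 → σ (i - 1) < τ i → i ≤ m) :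
    (∀ i, 1 ≤ i → i < ℓ →
      (if i < m then σ i else τ i) < (if i + 1 < m then σ (i + 1) else τ (i + 1))) ∧
    (∀ i, 1 ≤ i → i < k →
      (if i < m then τ i else σ i) < (if i + 1 < m then τ (i + 1) else σ (i + 1))) :=
  stmt3_general k ℓ m σ τ hkl hσmono hτmono hm hmax

end Stmt3
end

section
/- Let σ, τ be column tuples of lengths k < ℓ and let splice(σ,τ) = (σ̄, τ̄). Then max{1 ≤ i ≤ k+1 : σ_{i−1} < τ_i} = max{1 ≤ i ≤ k+1 : τ̄_{i−1} < σ̄_i}, and applying the splice operation to the pair (τ̄, σ̄) recovers (τ, σ). -/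
namespace Stmt5

theorem column_pred_lt {ℓ : ℕ} {τ : ℕ → ℕ} (h0 : τ 0 = 0)
    (hmono : ∀ i, 1 ≤ i → i < ℓ → τ i < τ (i + 1)) (hpos : ∀ i, 1 ≤ i → i ≤ ℓ → 0 < τ i)
    {i : ℕ} (hi : 1 ≤ i) (hiℓ : i ≤ ℓ) : τ (i - 1) < τ i := by
  obtain ⟨j, rfl⟩ : ∃ j, i = j + 1 := ⟨i - 1, by omega⟩
  rcases j with _ | j
  · simpa [h0] using hpos 1 le_rfl hiℓ
  · exact hmono (j + 1) (by omega) (by omega)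

theorem stmt5_general (k ℓ m : ℕ) (σ τ : ℕ → ℕ) (hkl : k < ℓ)
    (hτ0 : τ 0 = 0)
    (hτmono : ∀ i, 1 ≤ i → i < ℓ → τ i < τ (i + 1))
    (hτpos : ∀ i, 1 ≤ i → i ≤ ℓ → 0 < τ i)
    (hm : 1 ≤ m ∧ m ≤ k + 1 ∧ σ (m - 1) < τ m)
    (hmax : ∀ i, 1 ≤ i → i ≤ k + 1 → σ (i - 1) < τ i → i ≤ m) :
    -- `m` is the maximum of `{1 ≤ i ≤ k+1 : τ̄_{i−1} < σ̄_i}`: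
    (1 ≤ m ∧ m ≤ k + 1 ∧
      (if m - 1 < m then τ (m - 1) else σ (m - 1)) < (if m < m then σ m else τ m)) ∧
    (∀ i, 1 ≤ i → i ≤ k + 1 →
      (if i - 1 < m then τ (i - 1) else σ (i - 1)) < (if i < m then σ i else τ i) →
      i ≤ m) ∧
    -- splicing `(τ̄, σ̄)` at `m` recovers `(τ, σ)`:
    (∀ i, 1 ≤ i → i ≤ ℓ →
      (if i < m then (if i < m then τ i else σ i) else (if i < m then σ i else τ i)) = τ i) ∧
    (∀ i, 1 ≤ i → i ≤ k →
      (if i < m then (if i < m then σ i else τ i) else (if i < m then τ i else σ i)) = σ i) := by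
  obtain ⟨hm1, hm2, -⟩ := hm
  refine ⟨⟨hm1, hm2, ?_⟩, fun i hi1 hi2 hlt => ?_, fun i _ _ => ?_, fun i _ _ => ?_⟩
  · rw [if_pos (by omega), if_neg (lt_irrefl m)]
    exact column_pred_lt hτ0 hτmono hτpos hm1 (by omega)
  · -- beyond `m` the spliced condition at `i` is the original one, `σ (i - 1) < τ i`
    by_contra! hmi
    rw [if_neg (by omega), if_neg (by omega)] at hlt
    exact hmi.not_ge (hmax i hi1 hi2 hlt)
  · split_ifs <;> rfl
  · split_ifs <;> rfl

/-- Let `σ, τ` be column tuples of lengths `k < ℓ` (with the convention of a 0-th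
entry equal to `0`), `m = max {1 ≤ i ≤ k+1 : σ_{i−1} < τ_i}`, and let
`splice(σ,τ) = (σ̄, τ̄)` be defined by swapping suffixes starting at `m`.
Then `m` is also `max {1 ≤ i ≤ k+1 : τ̄_{i−1} < σ̄_i}`, and splicing the pair
`(τ̄, σ̄)` at this index recovers `(τ, σ)`. -/
theorem stmt5 (k ℓ m : ℕ) (σ τ : ℕ → ℕ) (hkl : k < ℓ)
    (hσ0 : σ 0 = 0) (hτ0 : τ 0 = 0)
    (hσmono : ∀ i, 1 ≤ i → i < k → σ i < σ (i + 1))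
    (hσpos : ∀ i, 1 ≤ i → i ≤ k → 0 < σ i)
    (hτmono : ∀ i, 1 ≤ i → i < ℓ → τ i < τ (i + 1))
    (hτpos : ∀ i, 1 ≤ i → i ≤ ℓ → 0 < τ i)
    (hm : 1 ≤ m ∧ m ≤ k + 1 ∧ σ (m - 1) < τ m)
    (hmax : ∀ i, 1 ≤ i → i ≤ k + 1 → σ (i - 1) < τ i → i ≤ m) :
    -- `m` is the maximum of `{1 ≤ i ≤ k+1 : τ̄_{i−1} < σ̄_i}`:
    (1 ≤ m ∧ m ≤ k + 1 ∧
      (if m - 1 < m then τ (m - 1) else σ (m - 1)) < (if m < m then σ m else τ m)) ∧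
    (∀ i, 1 ≤ i → i ≤ k + 1 →
      (if i - 1 < m then τ (i - 1) else σ (i - 1)) < (if i < m then σ i else τ i) →
      i ≤ m) ∧
    -- splicing `(τ̄, σ̄)` at `m` recovers `(τ, σ)`:
    (∀ i, 1 ≤ i → i ≤ ℓ →
      (if i < m then (if i < m then τ i else σ i) else (if i < m then σ i else τ i)) = τ i) ∧
    (∀ i, 1 ≤ i → i ≤ k →
      (if i < m then (if i < m then σ i else τ i) else (if i < m then τ i else σ i)) = σ i) :=
  stmt5_general k ℓ m σ τ hkl hτ0 hτmono hτpos hm hmax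

end Stmt5
end

section
/- The splice operation on pairs of column tuples is an involution: splice∘splice is the identity map on the set of all pairs of column tuples. -/
/-!
Let `m` be the splice point of `(σ, τ)` with `σ` shorter. The spliced pair has the same splice
point: past `m` its splice condition is the original one, which fails by maximality of `m`, and
at `m` it reads `τ_{m-1} < τ_m` (or `0 < τ_1`), true for a column tuple. Splicing again at `m`
swaps the same suffixes back.
-/

namespace Stmt6

/-- For column tuples `σ` (length `k`) and `τ` (length `ℓ`) with `k < ℓ`, the
0-indexed splice point `m − 1`, where `m = max {1 ≤ i ≤ k+1 : σ_{i−1} < τ_i}`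
(with the convention `σ_0 = 0`). -/
def spliceIdx (σ τ : List ℕ) : ℕ :=
  ((Finset.range (σ.length + 1)).filter
    (fun j => (if j = 0 then 0 else σ.getD (j - 1) 0) < τ.getD j 0)).sup id

/-- Elementary splice for `σ` shorter than `τ`: swap the suffixes starting at the
splice point. -/
def splicePair (σ τ : List ℕ) : List ℕ × List ℕ :=
  (σ.take (spliceIdx σ τ) ++ τ.drop (spliceIdx σ τ),
   τ.take (spliceIdx σ τ) ++ σ.drop (spliceIdx σ τ))

/-- The splice operation on an arbitrary pair of column tuples: elementary splice
if the first is shorter, the swapped elementary splice if the first is longer,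
and the identity if the lengths agree. -/
def splice (p : List ℕ × List ℕ) : List ℕ × List ℕ :=
  if p.1.length < p.2.length then splicePair p.1 p.2
  else if p.2.length < p.1.length then (splicePair p.2 p.1).swap
  else p

section Lists

variable {α : Type*} {l₁ l₂ : List α} {m j : ℕ}

lemma getD_take_append_drop_of_lt (hm : m ≤ l₁.length) (hj : j < m) (d : α) :
    (l₁.take m ++ l₂.drop m).getD j d = l₁.getD j d := by
  simp only [List.getD_eq_getElem?_getD]
  rw [List.getElem?_append_left (by rw [List.length_take_of_le hm]; exact hj),
    List.getElem?_take_of_lt hj]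

lemma getD_take_append_drop_of_le (hm : m ≤ l₁.length) (hj : m ≤ j) (d : α) :
    (l₁.take m ++ l₂.drop m).getD j d = l₂.getD j d := by
  simp only [List.getD_eq_getElem?_getD]
  rw [List.getElem?_append_right (by rw [List.length_take_of_le hm]; exact hj),
    List.length_take_of_le hm, List.getElem?_drop, Nat.add_sub_cancel' hj]

lemma _root_.List.Pairwise.getD_lt_getD {l : List ℕ} (hl : l.Pairwise (· < ·)) {i j : ℕ}
    (hij : i < j) (hj : j < l.length) (d : ℕ) : l.getD i d < l.getD j d := by
  rw [List.getD_eq_getElem _ _ (hij.trans hj), List.getD_eq_getElem _ _ hj]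
  exact List.pairwise_iff_getElem.1 hl i j _ hj hij

end Lists

section Splice

variable {σ τ : List ℕ} {m j : ℕ}

/- The convention `σ_0 = 0` of the splice point is read off the list `0 :: σ`; likewise `τ` is
a column tuple iff `0 :: τ` is strictly increasing. -/
lemma spliceIdx_eq_sup (σ τ : List ℕ) : spliceIdx σ τ =
    ((Finset.range (σ.length + 1)).filter (fun j => (0 :: σ).getD j 0 < τ.getD j 0)).sup id := by
  have (j : ℕ) : (if j = 0 then 0 else σ.getD (j - 1) 0) = (0 :: σ).getD j 0 := by
    cases j <;> rfl
  simp only [spliceIdx, this]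

lemma le_spliceIdx (hj : j ≤ σ.length) (h : (0 :: σ).getD j 0 < τ.getD j 0) :
    j ≤ spliceIdx σ τ := by
  rw [spliceIdx_eq_sup]
  exact Finset.le_sup (f := id)
    (Finset.mem_filter.2 ⟨Finset.mem_range.2 (Nat.lt_succ_of_le hj), h⟩)

lemma spliceIdx_le_iff : spliceIdx σ τ ≤ m ↔
    ∀ j ≤ σ.length, (0 :: σ).getD j 0 < τ.getD j 0 → j ≤ m := by
  simp only [spliceIdx_eq_sup, Finset.sup_le_iff, Finset.mem_filter, Finset.mem_range,
    Nat.lt_succ_iff, id_eq, and_imp]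

lemma spliceIdx_le_length (σ τ : List ℕ) : spliceIdx σ τ ≤ σ.length :=
  spliceIdx_le_iff.2 fun _ hj _ => hj

lemma length_splicePair_fst (h : σ.length ≤ τ.length) :
    (splicePair σ τ).1.length = τ.length := by
  have := spliceIdx_le_length σ τ
  simp only [splicePair, List.length_append, List.length_take, List.length_drop]
  omega

lemma length_splicePair_snd (h : σ.length ≤ τ.length) :
    (splicePair σ τ).2.length = σ.length := by
  have := spliceIdx_le_length σ τ
  simp only [splicePair, List.length_append, List.length_take, List.length_drop]
  omega

lemma spliceIdx_splicePair (hτ : (0 :: τ).Pairwise (· < ·)) (h : σ.length < τ.length) :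
    spliceIdx (splicePair σ τ).2 (splicePair σ τ).1 = spliceIdx σ τ := by
  set m := spliceIdx σ τ
  have hmσ : m ≤ σ.length := spliceIdx_le_length σ τ
  have hmτ : m + 1 ≤ (0 :: τ).length := by simp only [List.length_cons]; omega
  have hcons : 0 :: (splicePair σ τ).2 = (0 :: τ).take (m + 1) ++ (0 :: σ).drop (m + 1) := rfl
  have hfst : (splicePair σ τ).1 = σ.take m ++ τ.drop m := rfl
  apply le_antisymm
  · rw [spliceIdx_le_iff, length_splicePair_snd h.le]
    intro j hj hcond
    by_contra! hjm
    rw [hcons, getD_take_append_drop_of_le (by simp only [List.length_cons]; omega) hjm,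
      hfst, getD_take_append_drop_of_le hmσ hjm.le] at hcond
    exact absurd (le_spliceIdx hj hcond) (not_le.2 hjm)
  · apply le_spliceIdx (by rw [length_splicePair_snd h.le]; exact hmσ)
    rw [hcons, getD_take_append_drop_of_lt hmτ (Nat.lt_succ_self m),
      hfst, getD_take_append_drop_of_le hmσ le_rfl]
    exact hτ.getD_lt_getD (Nat.lt_succ_self m) (by simp only [List.length_cons]; omega) 0

lemma splicePair_splicePair (hτ : (0 :: τ).Pairwise (· < ·)) (h : σ.length < τ.length) :
    splicePair (splicePair σ τ).2 (splicePair σ τ).1 = (τ, σ) := by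
  have hmσ := spliceIdx_le_length σ τ
  rw [splicePair, spliceIdx_splicePair hτ h]
  simp only [splicePair]
  rw [List.take_left' (by simp only [List.length_take]; omega),
    List.drop_left' (by simp only [List.length_take]; omega),
    List.take_left' (by simp only [List.length_take]; omega),
    List.drop_left' (by simp only [List.length_take]; omega),
    List.take_append_drop, List.take_append_drop]

lemma splice_of_length_lt {p : List ℕ × List ℕ} (h : p.1.length < p.2.length) :
    splice p = splicePair p.1 p.2 :=
  if_pos h

lemma splice_swap (p : List ℕ × List ℕ) : splice p.swap = (splice p).swap := by
  rcases lt_trichotomy p.1.length p.2.length with h | h | h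
  · simp [splice, h, not_lt_of_gt h]
  · simp [splice, h]
  · simp [splice, h, not_lt_of_gt h]

lemma splice_splice_of_length_lt (hτ : (0 :: τ).Pairwise (· < ·)) (h : σ.length < τ.length) :
    splice (splice (σ, τ)) = (σ, τ) := by
  have hlen : (splicePair σ τ).2.length < (splicePair σ τ).1.length := by
    rw [length_splicePair_fst h.le, length_splicePair_snd h.le]
    exact h
  rw [splice_of_length_lt (p := (σ, τ)) h, ← Prod.swap_swap (splicePair σ τ), splice_swap,
    splice_of_length_lt hlen]
  simp only [Prod.fst_swap, Prod.snd_swap, splicePair_splicePair hτ h, Prod.swap_prod_mk]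

end Splice

/-- Splice is an involution on pairs of column tuples (strictly increasing lists
of positive integers). -/
theorem stmt6 (σ τ : List ℕ)
    (hσ : σ.Pairwise (· < ·)) (hτ : τ.Pairwise (· < ·))
    (hσpos : ∀ x ∈ σ, 0 < x) (hτpos : ∀ x ∈ τ, 0 < x) :
    splice (splice (σ, τ)) = (σ, τ) := by
  rcases lt_trichotomy σ.length τ.length with h | h | h
  · exact splice_splice_of_length_lt (List.pairwise_cons.2 ⟨hτpos, hτ⟩) h
  · simp [splice, h]
  · change splice (splice (τ, σ).swap) = (τ, σ).swap
    rw [splice_swap, splice_swap,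
      splice_splice_of_length_lt (List.pairwise_cons.2 ⟨hσpos, hσ⟩) h]

end Stmt6
end

section
/- Let γ be a column composition with d columns and F a column-strict filling of γ. If 1 ≤ i ≤ d−2 and some two of the column lengths γ'_i, γ'_{i+1}, γ'_{i+2} are equal, then the splice operators satisfy the braid relation S_i S_{i+1} S_i (F) = S_{i+1} S_i S_{i+1} (F). -/
/-!
Splicing two columns exchanges their lengths, and splicing two columns of equal length does
nothing. So if `γ'_i = γ'_{i+1}` (or `γ'_{i+1} = γ'_{i+2}`), one operator on each side of the
braid relation acts on two columns of equal length, and both sides reduce to `S_i S_{i+1} F`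
(or `S_{i+1} S_i F`). If `γ'_i = γ'_{i+2}`, the middle operator on each side is trivial and both
sides equal `F`, because splicing is an involution on strictly increasing columns: after splicing
`σ` into the longer `τ` at the point `k`, the new pair has the same splice point, since its
condition at `k` compares two consecutive entries of `τ` and above `k` is the old condition.
-/

namespace Stmt7

/-- 0-indexed splice point for column tuples `σ` (shorter) and `τ`. -/
def spliceIdx (σ τ : List ℕ) : ℕ :=
  ((Finset.range (σ.length + 1)).filter
    (fun j => (if j = 0 then 0 else σ.getD (j - 1) 0) < τ.getD j 0)).sup id

/-- Elementary splice for `σ` shorter than `τ`. -/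
def splicePair (σ τ : List ℕ) : List ℕ × List ℕ :=
  (σ.take (spliceIdx σ τ) ++ τ.drop (spliceIdx σ τ),
   τ.take (spliceIdx σ τ) ++ σ.drop (spliceIdx σ τ))

/-- The splice operation on an arbitrary pair of column tuples. -/
def splice (p : List ℕ × List ℕ) : List ℕ × List ℕ :=
  if p.1.length < p.2.length then splicePair p.1 p.2
  else if p.2.length < p.1.length then (splicePair p.2 p.1).swap
  else p

/-- The `i`-th splice operator (`i` 1-indexed) on a filling presented as its list
of columns (each column the list of its entries, read top to bottom): apply the
splice operation to columns `i` and `i+1`, leaving all other columns unchanged. -/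
def Sop (i : ℕ) (F : List (List ℕ)) : List (List ℕ) :=
  (F.set (i - 1) (splice (F.getD (i - 1) [], F.getD i [])).1).set i
    (splice (F.getD (i - 1) [], F.getD i [])).2

section

variable (σ τ : List ℕ)

lemma spliceIdx_le_length : spliceIdx σ τ ≤ σ.length :=
  Finset.sup_le fun _ hj => Nat.lt_succ_iff.mp (Finset.mem_range.mp (Finset.mem_filter.mp hj).1)

lemma not_lt_of_spliceIdx_lt {j : ℕ} (hj : spliceIdx σ τ < j) (hjσ : j ≤ σ.length) :
    ¬ σ.getD (j - 1) 0 < τ.getD j 0 := by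
  intro hlt
  have hmem : j ∈ (Finset.range (σ.length + 1)).filter
      (fun j => (if j = 0 then 0 else σ.getD (j - 1) 0) < τ.getD j 0) := by
    simp only [Finset.mem_filter, Finset.mem_range, if_neg (by omega : j ≠ 0)]
    exact ⟨by omega, hlt⟩
  exact (Finset.le_sup (f := id) hmem).not_gt hj

lemma spliceIdx_eq {k : ℕ} (hkσ : k ≤ σ.length) (hk : k ≠ 0 → σ.getD (k - 1) 0 < τ.getD k 0)
    (hgt : ∀ j, k < j → j ≤ σ.length → ¬ σ.getD (j - 1) 0 < τ.getD j 0) :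
    spliceIdx σ τ = k := by
  apply le_antisymm
  · refine Finset.sup_le fun j hj => ?_
    simp only [Finset.mem_filter, Finset.mem_range] at hj
    by_contra! hkj
    simp only [id] at hkj
    rw [if_neg (by omega)] at hj
    exact hgt j hkj (by omega) hj.2
  · rcases Nat.eq_zero_or_pos k with rfl | hpos
    · exact Nat.zero_le _
    · refine Finset.le_sup (f := id) (Finset.mem_filter.mpr ⟨Finset.mem_range.mpr (by omega), ?_⟩)
      rw [if_neg (by omega)]
      exact hk (by omega)

lemma getD_take_append_drop {l₁ l₂ : List ℕ} {k : ℕ} (h₁ : k ≤ l₁.length) (j : ℕ) :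
    (l₁.take k ++ l₂.drop k).getD j 0 = if j < k then l₁.getD j 0 else l₂.getD j 0 := by
  simp only [List.getD_eq_getElem?_getD, List.getElem?_append, List.length_take,
    min_eq_left h₁, List.getElem?_take, List.getElem?_drop]
  split_ifs <;> first | rfl | (congr 2; omega)

lemma getD_lt_getD_of_pairwise {l : List ℕ} (hl : l.Pairwise (· < ·)) {a b : ℕ} (hab : a < b)
    (hb : b < l.length) : l.getD a 0 < l.getD b 0 := by
  rw [List.getD_eq_getElem _ _ (hab.trans hb), List.getD_eq_getElem _ _ hb]
  exact List.pairwise_iff_getElem.mp hl a b _ hb hab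

lemma spliceIdx_splicePair (hlt : σ.length < τ.length) (hτ : τ.Pairwise (· < ·)) :
    spliceIdx (splicePair σ τ).2 (splicePair σ τ).1 = spliceIdx σ τ := by
  set k := spliceIdx σ τ with hk_def
  have hkσ : k ≤ σ.length := spliceIdx_le_length σ τ
  have hσ' := getD_take_append_drop (l₁ := τ) (l₂ := σ) (by omega : k ≤ τ.length)
  have hτ' := getD_take_append_drop (l₁ := σ) (l₂ := τ) hkσ
  simp only [splicePair, ← hk_def]
  apply spliceIdx_eq
  · simp only [List.length_append, List.length_take, List.length_drop]; omega
  · intro hk0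
    rw [hσ', hτ', if_pos (by omega), if_neg (by omega)]
    exact getD_lt_getD_of_pairwise hτ (by omega) (by omega)
  · intro j hkj hj
    simp only [List.length_append, List.length_take, List.length_drop] at hj
    rw [hσ', hτ', if_neg (by omega), if_neg (by omega)]
    exact not_lt_of_spliceIdx_lt σ τ hkj (by omega)

lemma splicePair_splicePair (hlt : σ.length < τ.length) (hτ : τ.Pairwise (· < ·)) :
    splicePair (splicePair σ τ).2 (splicePair σ τ).1 = (τ, σ) := by
  have hkσ : spliceIdx σ τ ≤ σ.length := spliceIdx_le_length σ τ
  rw [splicePair, spliceIdx_splicePair σ τ hlt hτ]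
  simp only [splicePair]
  rw [List.take_left' (List.length_take_of_le hkσ), List.drop_left' (List.length_take_of_le hkσ),
    List.take_left' (List.length_take_of_le (by omega)),
    List.drop_left' (List.length_take_of_le (by omega)),
    List.take_append_drop, List.take_append_drop]

lemma splicePair_length (h : σ.length ≤ τ.length) :
    (splicePair σ τ).1.length = τ.length ∧ (splicePair σ τ).2.length = σ.length := by
  have := spliceIdx_le_length σ τ
  simp only [splicePair, List.length_append, List.length_take, List.length_drop]
  omega

lemma splice_fst_length : (splice (σ, τ)).1.length = τ.length := by
  unfold splice
  split_ifs with h₁ h₂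
  · exact (splicePair_length σ τ h₁.le).1
  · exact (splicePair_length τ σ h₂.le).2
  · dsimp only at h₁ h₂ ⊢; omega

lemma splice_snd_length : (splice (σ, τ)).2.length = σ.length := by
  unfold splice
  split_ifs with h₁ h₂
  · exact (splicePair_length σ τ h₁.le).2
  · exact (splicePair_length τ σ h₂.le).1
  · dsimp only at h₁ h₂ ⊢; omega

lemma splice_of_length_eq (h : σ.length = τ.length) : splice (σ, τ) = (σ, τ) := by
  simp [splice, h]

lemma splice_splice (hσ : σ.Pairwise (· < ·)) (hτ : τ.Pairwise (· < ·)) :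
    splice (splice (σ, τ)) = (σ, τ) := by
  rcases lt_trichotomy σ.length τ.length with h | h | h
  · have hlen := splicePair_length σ τ h.le
    have hfirst : splice (σ, τ) = splicePair σ τ := if_pos h
    rw [hfirst, splice, if_neg (by omega), if_pos (by omega),
      splicePair_splicePair σ τ h hτ, Prod.swap_prod_mk]
  · rw [splice_of_length_eq σ τ h, splice_of_length_eq σ τ h]
  · have hlen := splicePair_length τ σ h.le
    have hfirst : splice (σ, τ) = (splicePair τ σ).swap := by
      rw [splice, if_neg (by dsimp only; omega), if_pos h]
    rw [hfirst, splice, Prod.fst_swap, Prod.snd_swap, if_pos (by omega),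
      splicePair_splicePair τ σ h hσ]

end

lemma Sop_append (P Q : List (List ℕ)) (A B : List ℕ) :
    Sop (P.length + 1) (P ++ A :: B :: Q) = P ++ (splice (A, B)).1 :: (splice (A, B)).2 :: Q := by
  induction P with
  | nil => simp [Sop]
  | cons X P ih =>
    simp only [List.cons_append, List.length_cons, Sop, Nat.add_sub_cancel, List.getD_cons_succ,
      List.set_cons_succ] at ih ⊢
    rw [ih]

lemma Sop_append_succ (P Q : List (List ℕ)) (A B C : List ℕ) :
    Sop (P.length + 2) (P ++ A :: B :: C :: Q) =
      P ++ A :: (splice (B, C)).1 :: (splice (B, C)).2 :: Q := by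
  simpa using Sop_append (P ++ [A]) Q B C

theorem Sop_braid_append (P Q : List (List ℕ)) (A B C : List ℕ)
    (hA : A.Pairwise (· < ·)) (hB : B.Pairwise (· < ·)) (hC : C.Pairwise (· < ·))
    (hlen : A.length = B.length ∨ B.length = C.length ∨ A.length = C.length) :
    Sop (P.length + 1) (Sop (P.length + 2) (Sop (P.length + 1) (P ++ A :: B :: C :: Q))) =
      Sop (P.length + 2) (Sop (P.length + 1) (Sop (P.length + 2) (P ++ A :: B :: C :: Q))) := by
  simp only [Sop_append, Sop_append_succ]
  congr 1
  rcases hlen with hAB | hBC | hAC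
  · simp [splice_of_length_eq, splice_snd_length, hAB]
  · simp [splice_of_length_eq, splice_fst_length, hBC]
  · simp [splice_of_length_eq, splice_fst_length, splice_snd_length, hAC,
      splice_splice A B hA hB, splice_splice B C hB hC]

lemma eq_take_append_getElem_cons (F : List (List ℕ)) {k : ℕ} (hk : k + 2 < F.length) :
    F = F.take k ++ F[k] :: F[k + 1] :: F[k + 2] :: F.drop (k + 3) := by
  rw [← List.drop_eq_getElem_cons, ← List.drop_eq_getElem_cons, ← List.drop_eq_getElem_cons,
    List.take_append_drop]

/-- If `F` is a column-strict filling of a column composition with `d` columns,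
`1 ≤ i ≤ d − 2`, and some two of the column lengths `γ'_i, γ'_{i+1}, γ'_{i+2}`
are equal, then the braid relation `S_i S_{i+1} S_i F = S_{i+1} S_i S_{i+1} F`
holds. -/
theorem stmt7 (n d i : ℕ) (F : List (List ℕ))
    (hd : F.length = d)
    (hcols : ∀ col ∈ F, col.Pairwise (· < ·) ∧ ∀ x ∈ col, 1 ≤ x ∧ x ≤ n)
    (hi1 : 1 ≤ i) (hi2 : i ≤ d - 2)
    (heq : (F.getD (i - 1) []).length = (F.getD i []).length ∨
           (F.getD i []).length = (F.getD (i + 1) []).length ∨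
           (F.getD (i - 1) []).length = (F.getD (i + 1) []).length) :
    Sop i (Sop (i + 1) (Sop i F)) = Sop (i + 1) (Sop i (Sop (i + 1) F)) := by
  obtain ⟨k, rfl⟩ : ∃ k, i = k + 1 := ⟨i - 1, by omega⟩
  have hk : k + 2 < F.length := by omega
  have hP : (F.take k).length = k := List.length_take_of_le (by omega)
  simp only [Nat.add_sub_cancel, List.getD_eq_getElem _ _ (by omega : k < F.length),
    List.getD_eq_getElem _ _ (by omega : k + 1 < F.length),
    List.getD_eq_getElem _ _ (by omega : k + 1 + 1 < F.length)] at heq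
  have hbraid := Sop_braid_append (F.take k) (F.drop (k + 3)) F[k] F[k + 1] F[k + 2]
    (hcols _ (List.getElem_mem _)).1 (hcols _ (List.getElem_mem _)).1
    (hcols _ (List.getElem_mem _)).1 heq
  rwa [← eq_take_append_getElem_cons F hk, hP] at hbraid

end Stmt7
end

section
/- If F is a column-strict filling of partition shape λ with entries in [n], then the row-sorted filling rsort(F), obtained by sorting the entries of each row of F in weakly increasing order from left to right, is a semistandard Young tableau of shape λ. -/
/-!
Let `a` be a row and `b` the row below it, so that `a[k] < b[k]` in every column `k` of `b`.
If `v` is the `j`-th smallest entry of `b`, then at least `j + 1` entries of `b` are `≤ v`, and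
the entries of `a` directly above them are `< v`. Hence at least `j + 1` entries of `a` are `< v`,
that is, the `j`-th smallest entry of `a` is `< v`.
-/

namespace List

variable {α β : Type*}

theorem Forall₂.countP_le_countP {p : α → Bool} {q : β → Bool} {l₁ : List α} {l₂ : List β}
    (h : Forall₂ (fun a b => p a → q b) l₁ l₂) : l₁.countP p ≤ l₂.countP q := by
  induction h with
  | nil => rfl
  | @cons a b _ _ hab _ ih =>
    simp only [countP_cons]
    by_cases ha : p a
    · simp [ha, hab ha, ih]
    · simp only [ha, Bool.false_eq_true, if_false]; split <;> omega

theorem forall₂_take_of_getD_lt [LT α] {a b : List α} {d : α} (hlen : b.length ≤ a.length)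
    (h : ∀ j < b.length, a.getD j d < b.getD j d) : Forall₂ (· < ·) (a.take b.length) b := by
  refine forall₂_iff_get.2 ⟨by simpa using hlen, fun j hja hjb => ?_⟩
  have := h j hjb
  rw [getD_eq_getElem _ _ hjb, getD_eq_getElem _ _ (hjb.trans_le hlen)] at this
  simpa using this

variable [LinearOrder α] {l : List α} {j : ℕ}

theorem SortedLE.lt_countP_le_getElem (hl : l.SortedLE) (hj : j < l.length) :
    j < l.countP (· ≤ l[j]) := by
  have htake : (l.take (j + 1)).countP (· ≤ l[j]) = j + 1 := by
    rw [countP_eq_length.2, length_take_of_le hj]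
    intro x hx
    obtain ⟨i, hi, rfl⟩ := mem_iff_getElem.1 hx
    simpa using hl.getElem_le_getElem_of_le (by simp at hi; omega)
  have := ((take_sublist (j + 1) l).countP_le (p := (· ≤ l[j])))
  omega

theorem SortedLE.getElem_lt_of_lt_countP (hl : l.SortedLE) (hj : j < l.length) {v : α}
    (h : j < l.countP (· < v)) : l[j] < v := by
  by_contra! hv
  have hdrop : (l.drop j).countP (· < v) = 0 := by
    refine countP_eq_zero.2 fun x hx => ?_
    obtain ⟨i, hi, rfl⟩ := mem_iff_getElem.1 hx
    simpa using hv.trans (hl.getElem_le_getElem_of_le (j.le_add_right i))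
  have htake := (countP_le_length (p := (· < v))).trans (length_take_le j l)
  rw [← take_append_drop j l, countP_append] at h
  omega

theorem SortedLE.getElem_lt_getElem_of_forall₂_lt {a a' b b' : List α} (ha : a' ~ a) (hb : b' ~ b)
    (ha' : a'.SortedLE) (hb' : b'.SortedLE) (hab : Forall₂ (· < ·) (a.take b.length) b)
    (hja : j < a'.length) (hjb : j < b'.length) : a'[j] < b'[j] := by
  set v := b'[j]
  refine ha'.getElem_lt_of_lt_countP hja ?_
  calc j < b'.countP (· ≤ v) := hb'.lt_countP_le_getElem hjb
    _ = b.countP (· ≤ v) := hb.countP_eq _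
    _ ≤ (a.take b.length).countP (· < v) := by
        refine (hab.imp fun x y hxy hyv => ?_).flip.countP_le_countP
        simpa using hxy.trans_le (by simpa using hyv)
    _ ≤ a.countP (· < v) := (take_sublist _ _).countP_le
    _ = a'.countP (· < v) := (ha.countP_eq _).symm

end List

namespace Stmt9

def sortRow (r : List ℕ) : List ℕ := r.mergeSort (fun a b => decide (a ≤ b))

/-- `rsort(F)`: sort each row of the filling `F` (presented as its list of rows,
top to bottom) into weakly increasing order. -/
def rsort (F : List (List ℕ)) : List (List ℕ) := F.map sortRow

theorem sortedLE_sortRow (r : List ℕ) : (sortRow r).SortedLE := List.sortedLE_mergeSort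

theorem sortRow_perm (r : List ℕ) : (sortRow r).Perm r := List.mergeSort_perm r _

theorem rsort_getD (F : List (List ℕ)) (i : ℕ) : (rsort F).getD i [] = sortRow (F.getD i []) := by
  simpa [rsort, sortRow] using List.getD_map (n := i) F [] sortRow

theorem sortRow_getD_lt_sortRow_getD {a b : List ℕ} (hlen : b.length ≤ a.length)
    (hab : ∀ j < b.length, a.getD j 0 < b.getD j 0) {j : ℕ} (hj : j < b.length) :
    (sortRow a).getD j 0 < (sortRow b).getD j 0 := by
  have hjb : j < (sortRow b).length := by simpa [sortRow] using hj
  have hja : j < (sortRow a).length := by simpa [sortRow] using hj.trans_le hlen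
  rw [List.getD_eq_getElem _ _ hja, List.getD_eq_getElem _ _ hjb]
  exact (sortedLE_sortRow a).getElem_lt_getElem_of_forall₂_lt (sortRow_perm a) (sortRow_perm b)
    (sortedLE_sortRow b) (List.forall₂_take_of_getD_lt hlen hab) hja hjb

theorem stmt9_general (F : List (List ℕ))
    (hshape : ∀ i, i + 1 < F.length → (F.getD (i + 1) []).length ≤ (F.getD i []).length)
    (hcs : ∀ i j, i + 1 < F.length → j < (F.getD (i + 1) []).length →
      (F.getD i []).getD j 0 < (F.getD (i + 1) []).getD j 0) :
    (∀ r ∈ rsort F, r.Pairwise (· ≤ ·)) ∧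
    (∀ i j, i + 1 < F.length → j < (F.getD (i + 1) []).length →
      ((rsort F).getD i []).getD j 0 < ((rsort F).getD (i + 1) []).getD j 0) := by
  refine ⟨?_, fun i j hi hj => ?_⟩
  · rintro _ hr
    obtain ⟨r, -, rfl⟩ := List.mem_map.1 hr
    exact (sortedLE_sortRow r).pairwise
  · rw [rsort_getD, rsort_getD]
    exact sortRow_getD_lt_sortRow_getD (hshape i hi) (hcs i · hi) hj

/-- If `F` is a column-strict filling of partition shape with entries in `[n]`,
then `rsort(F)` is a semistandard Young tableau: its rows are weakly increasing
and its columns are strictly increasing. -/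
theorem stmt9 (n : ℕ) (F : List (List ℕ))
    (hshape : ∀ i, i + 1 < F.length → (F.getD (i + 1) []).length ≤ (F.getD i []).length)
    (hentries : ∀ r ∈ F, ∀ x ∈ r, 1 ≤ x ∧ x ≤ n)
    (hcs : ∀ i j, i + 1 < F.length → j < (F.getD (i + 1) []).length →
      (F.getD i []).getD j 0 < (F.getD (i + 1) []).getD j 0) :
    (∀ r ∈ rsort F, r.Pairwise (· ≤ ·)) ∧
    (∀ i j, i + 1 < F.length → j < (F.getD (i + 1) []).length →
      ((rsort F).getD i []).getD j 0 < ((rsort F).getD (i + 1) []).getD j 0) :=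
  stmt9_general F hshape hcs

end Stmt9
end

section
/- For a column-strict filling F of partition shape λ with entries in [n], inv(F) = refinv(F), where refinv(F) is the number of triples (x, y, z) of cells in the augmented diagram of λ with x, z ∈ dg(λ) in the same row, z strictly to the left of x, y the cell directly below x, and F(x) < F(z) < F(y) (setting F(y) = ∞ if y lies outside dg(λ)). -/
/-!
Index everything by the pairs `(x, z)` of cells in a common row with `z` left of `x`, and let
`y` be the cell below `x`. Inversions inside a row are the pairs with `F x < F z`; inversions
between adjacent rows, moved up one row, are the pairs with `y ∈ μ` and `F z < F y`. By
column-strictness every cell outside the first row is a descent, so `Σ arm` counts the pairs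
with `y ∈ μ`. Finally, since `F x < F y` whenever `y ∈ μ`, for each pair
`[F x < F z] + [y ∈ μ ∧ F z < F y] - [y ∈ μ] = [F x < F z ∧ (y ∈ μ → F z < F y)]`.
-/

namespace Stmt11

/-- The descent set of a filling `F` of `μ`. -/
def Des (μ : YoungDiagram) (F : ℕ × ℕ → ℕ) : Finset (ℕ × ℕ) :=
  μ.cells.filter (fun c => 1 ≤ c.1 ∧ F (c.1 - 1, c.2) < F c)

/-- `arm(c)` = number of cells of `μ` strictly to the right of `c` in its row. -/
def arm (μ : YoungDiagram) (c : ℕ × ℕ) : ℕ := μ.rowLen c.1 - c.2 - 1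

/-- Inversions of `F`: pairs `(u, v)` with `u` Inv-attacking `v` (`u` strictly to
the left of `v` in the same row, or `u` in the row just below `v` in a strictly
later column) and `F u > F v`. -/
def InvSet (μ : YoungDiagram) (F : ℕ × ℕ → ℕ) : Finset ((ℕ × ℕ) × (ℕ × ℕ)) :=
  (μ.cells ×ˢ μ.cells).filter (fun p =>
    ((p.1.1 = p.2.1 ∧ p.1.2 < p.2.2) ∨ (p.1.1 = p.2.1 + 1 ∧ p.2.2 < p.1.2)) ∧
    F p.2 < F p.1)

/-- Refinv-triples of `F`, recorded as the pair `(x, z)`: `x, z` in the same row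
of `μ`, `z` strictly to the left of `x`, and `F x < F z < F y` where `y` is the
cell directly below `x` in the augmented diagram (`F y = ∞` if `y ∉ μ`). -/
def RefinvSet (μ : YoungDiagram) (F : ℕ × ℕ → ℕ) : Finset ((ℕ × ℕ) × (ℕ × ℕ)) :=
  (μ.cells ×ˢ μ.cells).filter (fun p =>
    p.1.1 = p.2.1 ∧ p.2.2 < p.1.2 ∧ F p.1 < F p.2 ∧
    ((p.1.1 + 1, p.1.2) ∈ μ.cells → F p.2 < F (p.1.1 + 1, p.1.2)))

open Finset

def rowPairs (μ : YoungDiagram) : Finset ((ℕ × ℕ) × (ℕ × ℕ)) :=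
  (μ.cells ×ˢ μ.cells).filter (fun p => p.1.1 = p.2.1 ∧ p.2.2 < p.1.2)

@[simp]
lemma mem_rowPairs {μ : YoungDiagram} {x z : ℕ × ℕ} :
    (x, z) ∈ rowPairs μ ↔ x ∈ μ ∧ z ∈ μ ∧ x.1 = z.1 ∧ z.2 < x.2 := by
  simp [rowPairs, and_assoc]

lemma card_filter_add_card_filter_and {α : Type*} (s : Finset α) (A B C : α → Prop)
    [DecidablePred A] [DecidablePred B] [DecidablePred C]
    (h : ∀ a ∈ s, B a → ¬A a → C a) :
    #(s.filter A) + #(s.filter fun a => B a ∧ C a) =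
      #(s.filter B) + #(s.filter fun a => A a ∧ (B a → C a)) := by
  simp only [card_filter, ← sum_add_distrib]
  refine sum_congr rfl fun a ha => ?_
  have := h a ha
  split_ifs <;> tauto

lemma card_invSet (μ : YoungDiagram) (F : ℕ × ℕ → ℕ) :
    #(InvSet μ F) = #((rowPairs μ).filter fun p => F p.1 < F p.2) +
      #((rowPairs μ).filter fun p =>
        (p.1.1 + 1, p.1.2) ∈ μ.cells ∧ F p.2 < F (p.1.1 + 1, p.1.2)) := by
  rw [InvSet, filter_congr (fun _ _ => or_and_right), filter_or, card_union_of_disjoint]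
  · congr 1
    · refine card_nbij' Prod.swap Prod.swap ?_ ?_ (fun _ _ => rfl) (fun _ _ => rfl) <;>
        rintro ⟨x, z⟩ <;> simp <;> grind
    · refine card_nbij' (fun p => ((p.2.1, p.1.2), p.2)) (fun p => ((p.1.1 + 1, p.1.2), p.2))
        ?_ ?_ ?_ ?_ <;> rintro ⟨⟨a, b⟩, ⟨c, d⟩⟩ <;> simp
      · rintro hab hcd rfl hdb hF
        exact ⟨⟨μ.up_left_mem (Nat.le_succ c) le_rfl hab, hcd, hdb⟩, hab, hF⟩
      all_goals grind
  · exact disjoint_filter.mpr fun _ _ h h' => by omega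

lemma card_rowPairs_filter_snd_eq (μ : YoungDiagram) {c : ℕ × ℕ} (hc : c ∈ μ) :
    #((rowPairs μ).filter fun p => p.2 = c) = arm μ c := by
  rw [arm, ← Nat.card_Ioo]
  refine card_nbij' (fun p => p.1.2) (fun j => ((c.1, j), c)) ?_ ?_ ?_ ?_
  · rintro ⟨⟨a, b⟩, z⟩
    simp only [coe_filter, Set.mem_ofPred_eq, mem_rowPairs, coe_Ioo, Set.mem_Ioo]
    rintro ⟨⟨hab, -, rfl, hb⟩, rfl⟩
    exact ⟨hb, μ.mem_iff_lt_rowLen.mp hab⟩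
  · intro j hj
    simp only [coe_Ioo, Set.mem_Ioo] at hj
    simp [hc, hj.1, μ.mem_iff_lt_rowLen.mpr hj.2]
  · rintro ⟨⟨a, b⟩, z⟩
    simp only [coe_filter, Set.mem_ofPred_eq, mem_rowPairs]
    rintro ⟨⟨-, -, rfl, -⟩, rfl⟩
    rfl
  · intro j _
    rfl

lemma sum_arm_eq_card_rowPairs (μ : YoungDiagram) {s : Finset (ℕ × ℕ)} (hs : s ⊆ μ.cells) :
    ∑ c ∈ s, arm μ c = #((rowPairs μ).filter fun p => p.2 ∈ s) := by
  rw [card_eq_sum_card_fiberwise (s := (rowPairs μ).filter fun p => p.2 ∈ s) (f := Prod.snd)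
    fun p hp => (mem_filter.mp hp).2]
  refine sum_congr rfl fun c hc => ?_
  rw [filter_filter, ← card_rowPairs_filter_snd_eq μ (hs hc)]
  congr 1
  exact filter_congr fun p _ => ⟨fun h => ⟨h ▸ hc, h⟩, And.right⟩

lemma card_rowPairs_filter_below_mem (μ : YoungDiagram) :
    #((rowPairs μ).filter fun p => (p.1.1 + 1, p.1.2) ∈ μ.cells) =
      #((rowPairs μ).filter fun p => p.2 ∈ μ.cells.filter fun c => 1 ≤ c.1) := by
  refine card_nbij' (fun p => ((p.1.1 + 1, p.1.2), (p.2.1 + 1, p.2.2)))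
    (fun p => ((p.1.1 - 1, p.1.2), (p.2.1 - 1, p.2.2))) ?_ ?_ ?_ ?_ <;>
    rintro ⟨⟨a, b⟩, ⟨c, d⟩⟩ <;> simp
  · rintro hab - rfl hdb hbelow
    have hleft := μ.up_left_mem le_rfl hdb.le hbelow
    exact ⟨⟨hbelow, hleft, rfl, hdb⟩, hleft⟩
  · rintro hab - rfl hdb - ha
    rw [Nat.sub_add_cancel ha]
    exact ⟨⟨μ.up_left_mem (Nat.sub_le a 1) le_rfl hab,
      μ.up_left_mem (Nat.sub_le a 1) hdb.le hab, rfl, hdb⟩, hab⟩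
  all_goals omega

lemma des_eq_filter (μ : YoungDiagram) (F : ℕ × ℕ → ℕ)
    (hcs : ∀ i j : ℕ, (i + 1, j) ∈ μ.cells → F (i, j) < F (i + 1, j)) :
    Des μ F = μ.cells.filter fun c => 1 ≤ c.1 := by
  refine filter_congr fun ⟨i, j⟩ hc => and_iff_left_of_imp fun hi => ?_
  obtain ⟨i, rfl⟩ := Nat.exists_eq_add_of_le' hi
  exact hcs i j hc

lemma sum_arm_des (μ : YoungDiagram) (F : ℕ × ℕ → ℕ)
    (hcs : ∀ i j : ℕ, (i + 1, j) ∈ μ.cells → F (i, j) < F (i + 1, j)) :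
    ∑ u ∈ Des μ F, arm μ u = #((rowPairs μ).filter fun p => (p.1.1 + 1, p.1.2) ∈ μ.cells) := by
  rw [des_eq_filter μ F hcs, sum_arm_eq_card_rowPairs μ (filter_subset _ _),
    card_rowPairs_filter_below_mem]

lemma refinvSet_eq_filter (μ : YoungDiagram) (F : ℕ × ℕ → ℕ) :
    RefinvSet μ F = (rowPairs μ).filter fun p => F p.1 < F p.2 ∧
      ((p.1.1 + 1, p.1.2) ∈ μ.cells → F p.2 < F (p.1.1 + 1, p.1.2)) := by
  rw [rowPairs, filter_filter, RefinvSet]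
  exact filter_congr fun _ _ => by simp only [and_assoc]

theorem stmt11_general (μ : YoungDiagram) (F : ℕ × ℕ → ℕ)
    (hcs : ∀ i j : ℕ, (i + 1, j) ∈ μ.cells → F (i, j) < F (i + 1, j)) :
    ((InvSet μ F).card : ℤ) - ∑ u ∈ Des μ F, (arm μ u : ℤ) =
      ((RefinvSet μ F).card : ℤ) := by
  have hcount := card_filter_add_card_filter_and (rowPairs μ) (fun p => F p.1 < F p.2)
    (fun p => (p.1.1 + 1, p.1.2) ∈ μ.cells) (fun p => F p.2 < F (p.1.1 + 1, p.1.2))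
    fun p _ hbelow hxz => (not_lt.mp hxz).trans_lt (hcs p.1.1 p.1.2 hbelow)
  rw [← Nat.cast_sum, card_invSet, sum_arm_des μ F hcs, refinvSet_eq_filter]
  omega

/-- For a column-strict filling `F` of partition shape,
`inv(F) = |Inv(F)| − Σ_{u ∈ Des(F)} arm(u)` equals `refinv(F)`, the number of
refinv-triples of `F`. -/
theorem stmt11 (n : ℕ) (μ : YoungDiagram) (F : ℕ × ℕ → ℕ)
    (hn : ∀ c ∈ μ.cells, 1 ≤ F c ∧ F c ≤ n)
    (hcs : ∀ i j : ℕ, (i + 1, j) ∈ μ.cells → F (i, j) < F (i + 1, j)) :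
    ((InvSet μ F).card : ℤ) - ∑ u ∈ Des μ F, (arm μ u : ℤ) =
      ((RefinvSet μ F).card : ℤ) :=
  stmt11_general μ F hcs

end Stmt11
end

section
/- For a column-strict filling F of partition shape λ, refinv(F) = |Inv(F)| − Σ_{u∈Des(F)} coarm(u↑), where coarm denotes the number of cells strictly to the left in the same row and u↑ is the cell above u. -/
/-!
Consider pairs `(x, z)` of cells in one row with `z` left of `x`, and let `y` be the cell below `x`.
Inversions are in bijection with the pairs having `F x < F z` (same-row inversions, swapped)
together with the pairs having `y ∈ μ` and `F z < F y` (an inversion `(y, z)` across adjacent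
rows determines `x = y↑`). Column strictness `F x < F y` means that when `y ∈ μ` at least one of
`F x < F z`, `F z < F y` holds, so `refinv(F)` plus the number of pairs with `y ∈ μ` is `|Inv(F)|`.
Finally, column strictness makes every cell outside the top row a descent, and the pairs with
`y = u` number `coarm(u↑)`.
-/

namespace Stmt12

/-- The descent set of a filling `F` of `μ`. -/
def Des (μ : YoungDiagram) (F : ℕ × ℕ → ℕ) : Finset (ℕ × ℕ) :=
  μ.cells.filter (fun c => 1 ≤ c.1 ∧ F (c.1 - 1, c.2) < F c)

/-- `coarm(c)` = number of cells strictly to the left of `c` in its row. -/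
def coarm (c : ℕ × ℕ) : ℕ := c.2

/-- Inversions of `F` over the Inv-attack relation. -/
def InvSet (μ : YoungDiagram) (F : ℕ × ℕ → ℕ) : Finset ((ℕ × ℕ) × (ℕ × ℕ)) :=
  (μ.cells ×ˢ μ.cells).filter (fun p =>
    ((p.1.1 = p.2.1 ∧ p.1.2 < p.2.2) ∨ (p.1.1 = p.2.1 + 1 ∧ p.2.2 < p.1.2)) ∧
    F p.2 < F p.1)

/-- Refinv-triples of `F`, recorded as the pair `(x, z)`. -/
def RefinvSet (μ : YoungDiagram) (F : ℕ × ℕ → ℕ) : Finset ((ℕ × ℕ) × (ℕ × ℕ)) :=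
  (μ.cells ×ˢ μ.cells).filter (fun p =>
    p.1.1 = p.2.1 ∧ p.2.2 < p.1.2 ∧ F p.1 < F p.2 ∧
    ((p.1.1 + 1, p.1.2) ∈ μ.cells → F p.2 < F (p.1.1 + 1, p.1.2)))

open Finset

def rowPairs (μ : YoungDiagram) : Finset ((ℕ × ℕ) × (ℕ × ℕ)) :=
  {p ∈ μ.cells ×ˢ μ.cells | p.1.1 = p.2.1 ∧ p.2.2 < p.1.2}

def ColumnStrict (μ : YoungDiagram) (F : ℕ × ℕ → ℕ) : Prop :=
  ∀ i j : ℕ, (i + 1, j) ∈ μ.cells → F (i, j) < F (i + 1, j)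

variable {μ : YoungDiagram} {F : ℕ × ℕ → ℕ}

theorem refinvSet_eq_filter_rowPairs (μ : YoungDiagram) (F : ℕ × ℕ → ℕ) :
    RefinvSet μ F = {p ∈ rowPairs μ | F p.1 < F p.2 ∧
      ((p.1.1 + 1, p.1.2) ∈ μ.cells → F p.2 < F (p.1.1 + 1, p.1.2))} := by
  rw [rowPairs, filter_filter, RefinvSet]
  simp only [and_assoc]

theorem card_refinvSet_add_card_rowPairs_below (hF : ColumnStrict μ F) :
    #(RefinvSet μ F) + #{p ∈ rowPairs μ | (p.1.1 + 1, p.1.2) ∈ μ.cells} =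
      #{p ∈ rowPairs μ | F p.1 < F p.2} +
        #{p ∈ rowPairs μ | (p.1.1 + 1, p.1.2) ∈ μ.cells ∧ F p.2 < F (p.1.1 + 1, p.1.2)} := by
  rw [refinvSet_eq_filter_rowPairs, card_filter, card_filter, card_filter, card_filter,
    ← sum_add_distrib, ← sum_add_distrib]
  refine sum_congr rfl fun ⟨⟨a, b⟩, z⟩ _ => ?_
  by_cases hy : (a + 1, b) ∈ μ.cells
  · have hxy := hF a b hy
    by_cases hzy : F z < F (a + 1, b)
    · simp [hy, hzy]
    · simp [hy, hzy, hxy.trans_le (not_lt.mp hzy)]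
  · simp [hy]

theorem card_sameRow_inversions (μ : YoungDiagram) (F : ℕ × ℕ → ℕ) :
    #{p ∈ μ.cells ×ˢ μ.cells | (p.1.1 = p.2.1 ∧ p.1.2 < p.2.2) ∧ F p.2 < F p.1} =
      #{p ∈ rowPairs μ | F p.1 < F p.2} := by
  refine card_nbij' Prod.swap Prod.swap ?_ ?_ (fun _ _ => rfl) (fun _ _ => rfl) <;>
  · rintro ⟨⟨a, b⟩, ⟨c, d⟩⟩ hp
    simp only [rowPairs, mem_coe, mem_filter, mem_product, Prod.swap] at hp ⊢
    tauto

theorem card_adjacentRow_inversions (μ : YoungDiagram) (F : ℕ × ℕ → ℕ) :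
    #{p ∈ μ.cells ×ˢ μ.cells | (p.1.1 = p.2.1 + 1 ∧ p.2.2 < p.1.2) ∧ F p.2 < F p.1} =
      #{p ∈ rowPairs μ | (p.1.1 + 1, p.1.2) ∈ μ.cells ∧ F p.2 < F (p.1.1 + 1, p.1.2)} := by
  refine card_nbij' (fun p => ((p.1.1 - 1, p.1.2), p.2)) (fun p => ((p.1.1 + 1, p.1.2), p.2))
    ?_ ?_ ?_ (fun _ _ => rfl)
  · rintro ⟨⟨a, b⟩, ⟨c, d⟩⟩ hp
    simp only [rowPairs, mem_coe, mem_filter, mem_product] at hp ⊢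
    obtain ⟨⟨hx, hz⟩, ⟨rfl, hdb⟩, hF⟩ := hp
    exact ⟨⟨⟨μ.up_left_mem (by omega) le_rfl hx, hz⟩, by omega, hdb⟩, hx, hF⟩
  · rintro ⟨⟨a, b⟩, ⟨c, d⟩⟩ hp
    simp only [rowPairs, mem_coe, mem_filter, mem_product] at hp ⊢
    obtain ⟨⟨⟨_, hz⟩, rfl, hdb⟩, hy, hF⟩ := hp
    exact ⟨⟨hy, hz⟩, ⟨rfl, hdb⟩, hF⟩
  · rintro ⟨⟨a, b⟩, z⟩ hp
    simp only [mem_coe, mem_filter] at hp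
    simp only [Nat.sub_add_cancel (show 1 ≤ a by omega)]

theorem card_invSet (μ : YoungDiagram) (F : ℕ × ℕ → ℕ) :
    #(InvSet μ F) = #{p ∈ rowPairs μ | F p.1 < F p.2} +
      #{p ∈ rowPairs μ | (p.1.1 + 1, p.1.2) ∈ μ.cells ∧ F p.2 < F (p.1.1 + 1, p.1.2)} := by
  rw [← card_sameRow_inversions, ← card_adjacentRow_inversions, ← card_union_of_disjoint,
    ← filter_or, InvSet]
  · simp only [or_and_right]
  · refine disjoint_filter.mpr fun _ _ h₁ h₂ => ?_
    omega

theorem des_eq_of_columnStrict (hF : ColumnStrict μ F) :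
    Des μ F = {c ∈ μ.cells | 1 ≤ c.1} := by
  refine filter_congr fun ⟨a, b⟩ hc => and_iff_left_of_imp fun ha => ?_
  obtain ⟨i, rfl⟩ := Nat.exists_eq_add_of_le' ha
  exact hF i b hc

theorem card_cells_left_of {x : ℕ × ℕ} (hx : x ∈ μ.cells) :
    #{z ∈ μ.cells | x.1 = z.1 ∧ z.2 < x.2} = x.2 := by
  rw [← card_range x.2]
  refine card_nbij' Prod.snd (fun b => (x.1, b)) ?_ ?_ ?_ ?_
  · rintro ⟨a, b⟩ hz
    simp_all
  · intro b hb
    simp only [coe_range, Set.mem_Iio] at hb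
    simpa [hb] using μ.up_left_mem le_rfl hb.le hx
  · rintro ⟨a, b⟩ hz
    simp_all
  · intro b _
    rfl

theorem sum_snd_eq_card_rowPairs_below (μ : YoungDiagram) :
    ∑ u ∈ μ.cells with 1 ≤ u.1, u.2 = #{p ∈ rowPairs μ | (p.1.1 + 1, p.1.2) ∈ μ.cells} := by
  have hshift : ∑ u ∈ μ.cells with 1 ≤ u.1, u.2 =
      ∑ x ∈ μ.cells with (x.1 + 1, x.2) ∈ μ.cells, x.2 := by
    refine sum_nbij' (fun u => (u.1 - 1, u.2)) (fun x => (x.1 + 1, x.2)) ?_ ?_ ?_ ?_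
      (fun _ _ => rfl)
    · rintro ⟨a, b⟩ hu
      simp only [mem_filter] at hu ⊢
      rw [Nat.sub_add_cancel hu.2]
      exact ⟨μ.up_left_mem (Nat.sub_le a 1) le_rfl hu.1, hu.1⟩
    · rintro ⟨a, b⟩ hx
      simp only [mem_filter] at hx ⊢
      exact ⟨hx.2, by omega⟩
    · rintro ⟨a, b⟩ hu
      simp only [mem_filter] at hu
      simp only [Nat.sub_add_cancel hu.2]
    · intro x _
      simp
  rw [hshift, sum_filter, rowPairs, filter_filter, card_filter, sum_product]
  refine sum_congr rfl fun x hx => ?_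
  by_cases hy : (x.1 + 1, x.2) ∈ μ.cells
  · simp only [hy, and_true, if_true, ← card_filter, card_cells_left_of hx]
  · simp [hy]

theorem stmt12_general (μ : YoungDiagram) (F : ℕ × ℕ → ℕ)
    (hcs : ∀ i j : ℕ, (i + 1, j) ∈ μ.cells → F (i, j) < F (i + 1, j)) :
    ((RefinvSet μ F).card : ℤ) =
      ((InvSet μ F).card : ℤ) - ∑ u ∈ Des μ F, (coarm (u.1 - 1, u.2) : ℤ) := by
  have hsum : ∑ u ∈ Des μ F, coarm (u.1 - 1, u.2) =
      #{p ∈ rowPairs μ | (p.1.1 + 1, p.1.2) ∈ μ.cells} :=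
    (des_eq_of_columnStrict hcs).symm ▸ sum_snd_eq_card_rowPairs_below μ
  rw [← Nat.cast_sum, hsum, card_invSet]
  have := card_refinvSet_add_card_rowPairs_below hcs
  omega

/-- For a column-strict filling `F` of partition shape,
`refinv(F) = |Inv(F)| − Σ_{u ∈ Des(F)} coarm(u↑)`, where `u↑` is the cell
directly above `u`. -/
theorem stmt12 (n : ℕ) (μ : YoungDiagram) (F : ℕ × ℕ → ℕ)
    (hn : ∀ c ∈ μ.cells, 1 ≤ F c ∧ F c ≤ n)
    (hcs : ∀ i j : ℕ, (i + 1, j) ∈ μ.cells → F (i, j) < F (i + 1, j)) :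
    ((RefinvSet μ F).card : ℤ) =
      ((InvSet μ F).card : ℤ) - ∑ u ∈ Des μ F, (coarm (u.1 - 1, u.2) : ℤ) :=
  stmt12_general μ F hcs

end Stmt12
end

section
/- For a column-strict filling F of a partition shape, the number of queue-inversion triples of F equals quinv(F) = |Quinv(F)| − Σ_{u∈Des(F)} arm(u↑). -/
namespace Stmt13

/-- The descent set of a filling `F` of `μ`. -/
def Des (μ : YoungDiagram) (F : ℕ × ℕ → ℕ) : Finset (ℕ × ℕ) :=
  μ.cells.filter (fun c => 1 ≤ c.1 ∧ F (c.1 - 1, c.2) < F c)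

/-- `arm(c)` = number of cells of `μ` strictly to the right of `c` in its row. -/
def arm (μ : YoungDiagram) (c : ℕ × ℕ) : ℕ := μ.rowLen c.1 - c.2 - 1

/-- Queue-inversions of `F`: pairs `(u, v)` with `u` Quinv-attacking `v` (`u`
strictly to the right of `v` in the same row, or `u` in the row just below `v`
in a strictly earlier column) and `F u > F v`. -/
def QuinvSet (μ : YoungDiagram) (F : ℕ × ℕ → ℕ) : Finset ((ℕ × ℕ) × (ℕ × ℕ)) :=
  (μ.cells ×ˢ μ.cells).filter (fun p =>
    ((p.1.1 = p.2.1 ∧ p.2.2 < p.1.2) ∨ (p.1.1 = p.2.1 + 1 ∧ p.1.2 < p.2.2)) ∧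
    F p.2 < F p.1)

/-- Quinv-triples of `F`, recorded as the pair `(x, z)`: `x, z` in the same row
of `μ`, `z` strictly to the right of `x`, and `F x < F z < F y` where `y` is the
cell directly below `x` in the augmented diagram (`F y = ∞` if `y ∉ μ`). -/
def QuinvTriples (μ : YoungDiagram) (F : ℕ × ℕ → ℕ) : Finset ((ℕ × ℕ) × (ℕ × ℕ)) :=
  (μ.cells ×ˢ μ.cells).filter (fun p =>
    p.1.1 = p.2.1 ∧ p.1.2 < p.2.2 ∧ F p.1 < F p.2 ∧
    ((p.1.1 + 1, p.1.2) ∈ μ.cells → F p.2 < F (p.1.1 + 1, p.1.2)))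

/-!
Every quantity is counted over the pairs `(x, z)` of cells in one row with `z` right of `x`;
let `y` be the cell below `x`. Same-row inversions `(z, x)` are the pairs with `F x < F z`, and
inversions `(y, z)` from the row below are the pairs with `y ∈ μ` and `F z < F y`. Column-strictness
makes every cell outside the top row a descent, so `∑_{u ∈ Des} arm(u↑)` counts the pairs with
`y ∈ μ`. Since `F x < F y` whenever `y ∈ μ`, pointwise
`[F x < F z ∧ (y ∈ μ → F z < F y)] + [y ∈ μ] = [F x < F z] + [y ∈ μ ∧ F z < F y]`.
-/

def rowPairs (μ : YoungDiagram) : Finset ((ℕ × ℕ) × (ℕ × ℕ)) :=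
  (μ.cells ×ˢ μ.cells).filter (fun p => p.1.1 = p.2.1 ∧ p.1.2 < p.2.2)

@[simp]
lemma mem_rowPairs {μ : YoungDiagram} {p : (ℕ × ℕ) × (ℕ × ℕ)} :
    p ∈ rowPairs μ ↔ p.1 ∈ μ ∧ p.2 ∈ μ ∧ p.1.1 = p.2.1 ∧ p.1.2 < p.2.2 := by
  simp [rowPairs, and_assoc]

lemma card_rowPairs_filter_fst_eq (μ : YoungDiagram) (c : ℕ × ℕ) :
    ((rowPairs μ).filter (·.1 = c)).card = arm μ c := by
  rw [arm, ← Nat.card_Ioo]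
  refine Finset.card_nbij' (fun p => p.2.2) (fun k => (c, (c.1, k))) ?_ ?_ ?_ ?_
  · rintro ⟨x, z⟩ hp
    simp only [Finset.coe_filter, mem_rowPairs, Set.mem_ofPred_eq] at hp
    obtain ⟨⟨-, hz, hrow, hlt⟩, rfl⟩ := hp
    simp only [Finset.coe_Ioo, Set.mem_Ioo]
    refine ⟨hlt, ?_⟩
    rw [hrow]
    exact YoungDiagram.mem_iff_lt_rowLen.mp hz
  · intro k hk
    simp only [Finset.coe_Ioo, Set.mem_Ioo] at hk
    simp only [Finset.coe_filter, mem_rowPairs, Set.mem_ofPred_eq, YoungDiagram.mem_iff_lt_rowLen,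
      and_true, true_and]
    exact ⟨YoungDiagram.mem_iff_lt_rowLen.mpr (hk.1.trans hk.2), hk.2, hk.1⟩
  · rintro ⟨x, z⟩ hp
    simp only [Finset.coe_filter, mem_rowPairs, Set.mem_ofPred_eq] at hp
    obtain ⟨⟨-, -, hrow, -⟩, rfl⟩ := hp
    simp [hrow]
  · intro k _
    rfl

lemma quinvTriples_eq_filter (μ : YoungDiagram) (F : ℕ × ℕ → ℕ) :
    QuinvTriples μ F = (rowPairs μ).filter (fun p => F p.1 < F p.2 ∧
      ((p.1.1 + 1, p.1.2) ∈ μ.cells → F p.2 < F (p.1.1 + 1, p.1.2))) := by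
  simp only [QuinvTriples, rowPairs, Finset.filter_filter, and_assoc]

lemma card_sameRow_inversions (μ : YoungDiagram) (F : ℕ × ℕ → ℕ) :
    ((μ.cells ×ˢ μ.cells).filter (fun p =>
      (p.1.1 = p.2.1 ∧ p.2.2 < p.1.2) ∧ F p.2 < F p.1)).card =
      ((rowPairs μ).filter (fun p => F p.1 < F p.2)).card := by
  refine Finset.card_nbij' Prod.swap Prod.swap ?_ ?_ (fun _ _ => rfl) (fun _ _ => rfl)
  · rintro ⟨u, v⟩ h
    simp only [Finset.coe_filter, Finset.mem_product, mem_rowPairs, YoungDiagram.mem_cells,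
      Set.mem_ofPred_eq] at h ⊢
    tauto
  · rintro ⟨x, z⟩ h
    simp only [Finset.coe_filter, Finset.mem_product, mem_rowPairs, YoungDiagram.mem_cells,
      Set.mem_ofPred_eq] at h ⊢
    tauto

lemma card_lowerRow_inversions (μ : YoungDiagram) (F : ℕ × ℕ → ℕ) :
    ((μ.cells ×ˢ μ.cells).filter (fun p =>
      (p.1.1 = p.2.1 + 1 ∧ p.1.2 < p.2.2) ∧ F p.2 < F p.1)).card =
      ((rowPairs μ).filter (fun p => (p.1.1 + 1, p.1.2) ∈ μ.cells ∧
        F p.2 < F (p.1.1 + 1, p.1.2))).card := by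
  refine Finset.card_nbij' (fun p => ((p.2.1, p.1.2), p.2)) (fun p => ((p.1.1 + 1, p.1.2), p.2))
    ?_ ?_ ?_ ?_
  · rintro ⟨⟨i, j⟩, ⟨k, l⟩⟩ h
    simp only [Finset.coe_filter, Finset.mem_product, mem_rowPairs, YoungDiagram.mem_cells,
      Set.mem_ofPred_eq] at h ⊢
    obtain ⟨⟨hu, hv⟩, ⟨rfl, hjl⟩, hF⟩ := h
    exact ⟨⟨μ.up_left_mem (Nat.le_succ k) le_rfl hu, hv, trivial, hjl⟩, hu, hF⟩
  · rintro ⟨⟨i, j⟩, ⟨k, l⟩⟩ h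
    simp only [Finset.coe_filter, Finset.mem_product, mem_rowPairs, YoungDiagram.mem_cells,
      Set.mem_ofPred_eq] at h ⊢
    obtain ⟨⟨-, hz, rfl, hjl⟩, hy, hF⟩ := h
    exact ⟨⟨hy, hz⟩, ⟨rfl, hjl⟩, hF⟩
  · rintro ⟨⟨i, j⟩, ⟨k, l⟩⟩ h
    obtain ⟨-, ⟨hik, -⟩, -⟩ := Finset.mem_filter.mp h
    simp_all
  · rintro ⟨⟨i, j⟩, ⟨k, l⟩⟩ h
    obtain ⟨⟨-, -, hik, -⟩, -⟩ := (Finset.mem_filter.mp h).imp_left mem_rowPairs.mp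
    simp_all

lemma card_quinvSet (μ : YoungDiagram) (F : ℕ × ℕ → ℕ) :
    (QuinvSet μ F).card = ((rowPairs μ).filter (fun p => F p.1 < F p.2)).card +
      ((rowPairs μ).filter (fun p => (p.1.1 + 1, p.1.2) ∈ μ.cells ∧
        F p.2 < F (p.1.1 + 1, p.1.2))).card := by
  rw [QuinvSet]
  simp_rw [or_and_right]
  rw [Finset.filter_or, Finset.card_union_of_disjoint, card_sameRow_inversions,
    card_lowerRow_inversions]
  refine Finset.disjoint_filter.mpr fun p _ h h' => ?_
  omega

lemma sum_arm_des_eq_card (μ : YoungDiagram) (F : ℕ × ℕ → ℕ)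
    (hcs : ∀ i j : ℕ, (i + 1, j) ∈ μ.cells → F (i, j) < F (i + 1, j)) :
    ∑ u ∈ Des μ F, arm μ (u.1 - 1, u.2) =
      ((rowPairs μ).filter (fun p => (p.1.1 + 1, p.1.2) ∈ μ.cells)).card := by
  rw [Finset.card_eq_sum_card_fiberwise (f := fun p => (p.1.1 + 1, p.1.2)) (t := Des μ F)]
  · refine Finset.sum_congr rfl ?_
    rintro ⟨i, j⟩ hu
    obtain ⟨hu, hrow, -⟩ := Finset.mem_filter.mp hu
    obtain ⟨k, rfl⟩ := Nat.exists_eq_add_of_le' hrow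
    rw [← card_rowPairs_filter_fst_eq, Finset.filter_filter]
    refine congrArg Finset.card (Finset.filter_congr fun p _ => ⟨?_, ?_⟩)
    · rintro h
      rw [h]
      exact ⟨hu, rfl⟩
    · rintro ⟨-, h⟩
      simp only [Prod.ext_iff] at h ⊢
      omega
  · rintro ⟨⟨i, j⟩, z⟩ hp
    simp only [Finset.coe_filter, mem_rowPairs, Set.mem_ofPred_eq] at hp
    exact Finset.mem_filter.mpr ⟨hp.2, Nat.le_add_left 1 i, hcs i j hp.2⟩

lemma ite_lt_and_imp_add_ite (a b c : ℕ) (q : Prop) [Decidable q] (hac : q → a < c) :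
    ((if a < b ∧ (q → b < c) then 1 else 0) + if q then 1 else 0) =
      (if a < b then 1 else 0) + if q ∧ b < c then 1 else 0 := by
  by_cases hq : q
  · have := hac hq
    simp only [hq, true_imp_iff, true_and, if_true]
    split_ifs <;> omega
  · simp [hq]

lemma card_quinvTriples_add_card_rowPairs_below (μ : YoungDiagram) (F : ℕ × ℕ → ℕ)
    (hcs : ∀ i j : ℕ, (i + 1, j) ∈ μ.cells → F (i, j) < F (i + 1, j)) :
    (QuinvTriples μ F).card +
        ((rowPairs μ).filter (fun p => (p.1.1 + 1, p.1.2) ∈ μ.cells)).card =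
      (QuinvSet μ F).card := by
  rw [card_quinvSet, quinvTriples_eq_filter]
  simp only [Finset.card_filter, ← Finset.sum_add_distrib]
  exact Finset.sum_congr rfl fun p _ => ite_lt_and_imp_add_ite _ _ _ _ (hcs p.1.1 p.1.2)

theorem stmt13_general (μ : YoungDiagram) (F : ℕ × ℕ → ℕ)
    (hcs : ∀ i j : ℕ, (i + 1, j) ∈ μ.cells → F (i, j) < F (i + 1, j)) :
    ((QuinvTriples μ F).card : ℤ) =
      ((QuinvSet μ F).card : ℤ) - ∑ u ∈ Des μ F, (arm μ (u.1 - 1, u.2) : ℤ) := by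
  rw [← Nat.cast_sum, sum_arm_des_eq_card μ F hcs,
    ← card_quinvTriples_add_card_rowPairs_below μ F hcs]
  push_cast
  ring

/-- For a column-strict filling `F` of partition shape, the number of
quinv-triples equals `quinv(F) = |Quinv(F)| − Σ_{u ∈ Des(F)} arm(u↑)`. -/
theorem stmt13 (n : ℕ) (μ : YoungDiagram) (F : ℕ × ℕ → ℕ)
    (hn : ∀ c ∈ μ.cells, 1 ≤ F c ∧ F c ≤ n)
    (hcs : ∀ i j : ℕ, (i + 1, j) ∈ μ.cells → F (i, j) < F (i + 1, j)) :
    ((QuinvTriples μ F).card : ℤ) =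
      ((QuinvSet μ F).card : ℤ) - ∑ u ∈ Des μ F, (arm μ (u.1 - 1, u.2) : ℤ) :=
  stmt13_general μ F hcs

end Stmt13
end

section
/- Let F be a column-strict filling of partition shape λ with T = rsort(F), and let c be a cell in row i of F with F(c) = j+1. Then zcount(c,F), the number of quinv-triples (x,y,z) of F with z = c, satisfies zcount(c,F) ≤ SE_{ij}(T) = T^j_i − T^{j+1}_{i+1}. -/
/-!
Shifting the cells of row `i + 1` with entries `≤ j + 1` up by one row gives, by column
strictness, distinct cells of row `i` with entries `≤ j`. The cells `x` counted by
`zcount` also lie in row `i` with entries `≤ j`, and none of them is such a shifted cell,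
since the entry below `x` exceeds `j + 1`. Hence both families fit disjointly into the
set counted by `T^j_i`.
-/

namespace Stmt14

/-- `T^j_i`: the number of entries `≤ j` in (0-indexed) row `i` of `F`; this is
the Gelfand–Tsetlin entry of the pattern associated to `rsort(F)`, since sorting
a row does not change its multiset of entries. -/
def Tval (μ : YoungDiagram) (F : ℕ × ℕ → ℕ) (i j : ℕ) : ℕ :=
  (μ.cells.filter (fun c => c.1 = i ∧ F c ≤ j)).card

/-- `zcount(c, F)`: the number of quinv-triples `(x, y, z)` of `F` with `z = c`;
here `x` lies in the same row as `c` strictly to its left, `y` is the cell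
directly below `x` in the augmented diagram, and `F x < F c < F y`
(`F y = ∞` if `y ∉ μ`). -/
def zcount (μ : YoungDiagram) (F : ℕ × ℕ → ℕ) (c : ℕ × ℕ) : ℕ :=
  (μ.cells.filter (fun x => x.1 = c.1 ∧ x.2 < c.2 ∧ F x < F c ∧
    ((x.1 + 1, x.2) ∈ μ.cells → F c < F (x.1 + 1, x.2)))).card

section ColumnStrict

variable {μ : YoungDiagram} {F : ℕ × ℕ → ℕ}

lemma mem_le_pred_of_mem_succ_row
    (hcs : ∀ i j : ℕ, (i + 1, j) ∈ μ.cells → F (i, j) < F (i + 1, j))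
    {i j k : ℕ} (hk : (i + 1, k) ∈ μ.cells) (hF : F (i + 1, k) ≤ j + 1) :
    (i, k) ∈ μ.cells ∧ F (i, k) ≤ j :=
  ⟨μ.up_left_mem (Nat.le_succ i) le_rfl hk, by have := hcs i k hk; omega⟩

lemma card_add_Tval_succ_le
    (hcs : ∀ i j : ℕ, (i + 1, j) ∈ μ.cells → F (i, j) < F (i + 1, j))
    {i j : ℕ} {S : Finset (ℕ × ℕ)}
    (hS : S ⊆ μ.cells.filter (fun x => x.1 = i ∧ F x ≤ j))
    (hbelow : ∀ x ∈ S, (i + 1, x.2) ∈ μ.cells → j + 1 < F (i + 1, x.2)) :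
    S.card + Tval μ F (i + 1) (j + 1) ≤ Tval μ F i j := by
  set C := μ.cells.filter (fun y => y.1 = i + 1 ∧ F y ≤ j + 1)
  set D := C.image (fun y : ℕ × ℕ => (i, y.2))
  have hC : ∀ y ∈ C, y = (i + 1, y.2) ∧ (i + 1, y.2) ∈ μ.cells ∧ F (i + 1, y.2) ≤ j + 1 := by
    intro y hy
    obtain ⟨hyμ, hy1, hyF⟩ := by simpa only [C, Finset.mem_filter] using hy
    have hy_eq : y = (i + 1, y.2) := Prod.ext hy1 rfl
    exact ⟨hy_eq, hy_eq ▸ hyμ, hy_eq ▸ hyF⟩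
  have hDcard : D.card = C.card := by
    refine Finset.card_image_of_injOn fun a ha b hb hab => ?_
    rw [(hC a ha).1, (hC b hb).1, (Prod.mk.inj hab).2]
  have hDsub : D ⊆ μ.cells.filter (fun x => x.1 = i ∧ F x ≤ j) := by
    intro x hx
    obtain ⟨y, hy, rfl⟩ := Finset.mem_image.mp hx
    obtain ⟨hmem, hle⟩ := mem_le_pred_of_mem_succ_row hcs (hC y hy).2.1 (hC y hy).2.2
    exact Finset.mem_filter.mpr ⟨hmem, rfl, hle⟩
  have hdisj : Disjoint S D := by
    refine Finset.disjoint_left.mpr fun x hxS hxD => ?_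
    obtain ⟨y, hy, rfl⟩ := Finset.mem_image.mp hxD
    have hgt : j + 1 < F (i + 1, y.2) := hbelow (i, y.2) hxS (hC y hy).2.1
    exact absurd (hC y hy).2.2 (Nat.not_le.mpr hgt)
  calc S.card + Tval μ F (i + 1) (j + 1) = (S ∪ D).card := by
        rw [Finset.card_union_of_disjoint hdisj, hDcard]; rfl
    _ ≤ Tval μ F i j := Finset.card_le_card (Finset.union_subset hS hDsub)

end ColumnStrict

theorem stmt14_general (μ : YoungDiagram) (F : ℕ × ℕ → ℕ)
    (hcs : ∀ i j : ℕ, (i + 1, j) ∈ μ.cells → F (i, j) < F (i + 1, j))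
    (c : ℕ × ℕ) (j : ℕ) (hFc : F c = j + 1) :
    (zcount μ F c : ℤ) ≤ (Tval μ F c.1 j : ℤ) - (Tval μ F (c.1 + 1) (j + 1) : ℤ) := by
  have key : zcount μ F c + Tval μ F (c.1 + 1) (j + 1) ≤ Tval μ F c.1 j := by
    refine card_add_Tval_succ_le hcs (fun x hx => ?_) (fun x hx hbelow => ?_)
    · obtain ⟨hxμ, hx1, -, hxF, -⟩ := Finset.mem_filter.mp hx
      exact Finset.mem_filter.mpr ⟨hxμ, hx1, by omega⟩
    · obtain ⟨-, hx1, -, -, himp⟩ := Finset.mem_filter.mp hx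
      rw [← hx1, ← hFc]
      exact himp (hx1 ▸ hbelow)
  omega

/-- For a column-strict filling `F` of partition shape with `T = rsort(F)` and a
cell `c` in row `i` with `F c = j + 1`, one has
`zcount(c, F) ≤ SE_{ij}(T) = T^j_i − T^{j+1}_{i+1}`. -/
theorem stmt14 (n : ℕ) (μ : YoungDiagram) (F : ℕ × ℕ → ℕ)
    (hn : ∀ c ∈ μ.cells, 1 ≤ F c ∧ F c ≤ n)
    (hcs : ∀ i j : ℕ, (i + 1, j) ∈ μ.cells → F (i, j) < F (i + 1, j))
    (c : ℕ × ℕ) (hc : c ∈ μ.cells) (j : ℕ) (hFc : F c = j + 1) :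
    (zcount μ F c : ℤ) ≤ (Tval μ F c.1 j : ℤ) - (Tval μ F (c.1 + 1) (j + 1) : ℤ) :=
  stmt14_general μ F hcs c j hFc

end Stmt14
end

section
/- Let F be a column-strict filling of partition shape λ and let c, d be two cells in the same row of F containing the same entry, with c to the right of d. Then zcount(c,F) ≥ zcount(d,F), where zcount(u,F) is the number of quinv-triples of F with third component u. -/
namespace Stmt15

/-- `zcount(c, F)`: the number of quinv-triples `(x, y, z)` of `F` with `z = c`. -/
def zcount (μ : YoungDiagram) (F : ℕ × ℕ → ℕ) (c : ℕ × ℕ) : ℕ :=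
  (μ.cells.filter (fun x => x.1 = c.1 ∧ x.2 < c.2 ∧ F x < F c ∧
    ((x.1 + 1, x.2) ∈ μ.cells → F c < F (x.1 + 1, x.2)))).card

theorem stmt15_general (μ : YoungDiagram) (F : ℕ × ℕ → ℕ) (c d : ℕ × ℕ)
    (hrow : c.1 = d.1) (hval : F c = F d) (hlr : d.2 < c.2) :
    zcount μ F d ≤ zcount μ F c := by
  rw [zcount, zcount, hrow, hval]
  exact Finset.card_le_card <| Finset.monotone_filter_right _
    fun _ _ ⟨hx₁, hx₂, hx⟩ => ⟨hx₁, hx₂.trans hlr, hx⟩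

/-- For a column-strict filling `F` of partition shape and cells `c, d` in the
same row containing the same entry with `c` to the right of `d`,
`zcount(c, F) ≥ zcount(d, F)`. -/
theorem stmt15 (n : ℕ) (μ : YoungDiagram) (F : ℕ × ℕ → ℕ)
    (hn : ∀ c ∈ μ.cells, 1 ≤ F c ∧ F c ≤ n)
    (hcs : ∀ i j : ℕ, (i + 1, j) ∈ μ.cells → F (i, j) < F (i + 1, j))
    (c d : ℕ × ℕ) (hc : c ∈ μ.cells) (hd : d ∈ μ.cells)
    (hrow : c.1 = d.1) (hval : F c = F d) (hlr : d.2 < c.2) :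
    zcount μ F d ≤ zcount μ F c :=
  stmt15_general μ F c d hrow hval hlr

end Stmt15
end

section
/- Let F be a column-strict filling of partition shape λ with T = rsort(F). Then zcount(c,F) = SE_{ij}(T) for all i, j and all cells c in row i with F(c) = j+1 if and only if F = T (i.e., F is already a semistandard Young tableau). -/
/-!
Under column strictness, `SE_{ij}(T)` counts the cells `x` of row `i` with `F x ≤ j` whose
lower neighbour is absent or exceeds `j + 1`, and for `F c = j + 1` the quinv-triples ending at
`c` are exactly those cells lying to the left of `c`. So the identity at `c` says that no such
cell lies to the right of `c`. Weakly increasing rows clearly forbid this. Conversely, take a row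
inversion `F x < F c`, `c` left of `x`, with `F c` maximal: were the cell below `x` present with
value `≤ F c`, then the cells below `c` and `x` would form an inversion with a larger top value,
so `x` is a cell of the above kind to the right of `c`.
-/

namespace Stmt16

/-- `T^j_i`: the number of entries `≤ j` in (0-indexed) row `i` of `F`, i.e. the
Gelfand–Tsetlin entry of the pattern associated to `rsort(F)`. -/
def Tval (μ : YoungDiagram) (F : ℕ × ℕ → ℕ) (i j : ℕ) : ℕ :=
  (μ.cells.filter (fun c => c.1 = i ∧ F c ≤ j)).card

/-- `zcount(c, F)`: the number of quinv-triples `(x, y, z)` of `F` with `z = c`. -/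
def zcount (μ : YoungDiagram) (F : ℕ × ℕ → ℕ) (c : ℕ × ℕ) : ℕ :=
  (μ.cells.filter (fun x => x.1 = c.1 ∧ x.2 < c.2 ∧ F x < F c ∧
    ((x.1 + 1, x.2) ∈ μ.cells → F c < F (x.1 + 1, x.2)))).card

open Finset

def seCells (μ : YoungDiagram) (F : ℕ × ℕ → ℕ) (i j : ℕ) : Finset (ℕ × ℕ) :=
  μ.cells.filter fun x => x.1 = i ∧ F x ≤ j ∧ ((x.1 + 1, x.2) ∈ μ → j + 1 < F (x.1 + 1, x.2))

def IsRowInversion (μ : YoungDiagram) (F : ℕ × ℕ → ℕ) (c x : ℕ × ℕ) : Prop :=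
  c ∈ μ ∧ x ∈ μ ∧ c.1 = x.1 ∧ c.2 < x.2 ∧ F x < F c

section

variable {μ : YoungDiagram} {F : ℕ × ℕ → ℕ}

theorem Tval_eq_Tval_succ_add_card_seCells
    (hcs : ∀ i j : ℕ, (i + 1, j) ∈ μ.cells → F (i, j) < F (i + 1, j)) (i j : ℕ) :
    Tval μ F i j = Tval μ F (i + 1) (j + 1) + #(seCells μ F i j) := by
  classical
  let covered : ℕ × ℕ → Prop := fun x => (x.1 + 1, x.2) ∈ μ ∧ F (x.1 + 1, x.2) ≤ j + 1
  have hsplit := card_filter_add_card_filter_not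
    (s := μ.cells.filter fun x => x.1 = i ∧ F x ≤ j) covered
  have hshift : #((μ.cells.filter fun x => x.1 = i ∧ F x ≤ j).filter covered)
      = Tval μ F (i + 1) (j + 1) := by
    refine card_nbij' (fun x => (x.1 + 1, x.2)) (fun y => (i, y.2)) ?_ ?_ ?_ ?_
    · rintro ⟨a, b⟩ hx
      simp only [mem_coe, mem_filter, covered] at hx ⊢
      obtain ⟨⟨-, rfl, -⟩, hbelow, hle⟩ := hx
      exact ⟨hbelow, rfl, hle⟩
    · rintro ⟨a, b⟩ hy
      simp only [mem_coe, mem_filter, covered] at hy ⊢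
      obtain ⟨hmem, rfl, hle⟩ := hy
      have := hcs i b hmem
      exact ⟨⟨μ.up_left_mem (Nat.le_succ i) le_rfl hmem, trivial, by omega⟩, hmem, hle⟩
    · rintro ⟨a, b⟩ hx
      simp only [mem_coe, mem_filter] at hx
      simp [hx.1.2.1]
    · rintro ⟨a, b⟩ hy
      simp only [mem_coe, mem_filter] at hy
      simp [hy.2.1]
  have hrest : (μ.cells.filter fun x => x.1 = i ∧ F x ≤ j).filter (¬covered ·)
      = seCells μ F i j := by
    rw [seCells, filter_filter]
    refine filter_congr fun x _ => ?_
    simp only [covered, not_and, not_le, and_assoc]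
  rw [← hshift, ← hrest, hsplit, Tval]

theorem zcount_eq_card_seCells_left {c : ℕ × ℕ} {j : ℕ} (hFc : F c = j + 1) :
    zcount μ F c = #((seCells μ F c.1 j).filter fun x => x.2 < c.2) := by
  rw [zcount, seCells, filter_filter]
  refine congrArg card (filter_congr fun x _ => ?_)
  rw [hFc]
  constructor
  · rintro ⟨hrow, hcol, hlt, hbelow⟩
    exact ⟨⟨hrow, by omega, hbelow⟩, hcol⟩
  · rintro ⟨⟨hrow, hle, hbelow⟩, hcol⟩
    exact ⟨hrow, hcol, by omega, hbelow⟩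

theorem zcount_eq_SE_iff
    (hcs : ∀ i j : ℕ, (i + 1, j) ∈ μ.cells → F (i, j) < F (i + 1, j))
    {c : ℕ × ℕ} {j : ℕ} (hFc : F c = j + 1) :
    (zcount μ F c : ℤ) = (Tval μ F c.1 j : ℤ) - (Tval μ F (c.1 + 1) (j + 1) : ℤ) ↔
      ∀ x ∈ seCells μ F c.1 j, x.2 < c.2 := by
  rw [Tval_eq_Tval_succ_add_card_seCells hcs, zcount_eq_card_seCells_left hFc, Nat.cast_add,
    add_sub_cancel_left, Nat.cast_inj, card_filter_eq_iff]

theorem le_of_row_le_succ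
    (hrow : ∀ c ∈ μ.cells, (c.1, c.2 + 1) ∈ μ.cells → F c ≤ F (c.1, c.2 + 1))
    {i a b : ℕ} (hab : a ≤ b) (hb : (i, b) ∈ μ) : F (i, a) ≤ F (i, b) := by
  induction b, hab using Nat.le_induction with
  | base => rfl
  | succ b hab ih =>
    have hb' : (i, b) ∈ μ := μ.up_left_mem le_rfl (Nat.le_succ b) hb
    exact (ih hb').trans (hrow (i, b) hb' hb)

theorem exists_maximal_rowInversion {c x : ℕ × ℕ} (h : IsRowInversion μ F c x) :
    ∃ c x, IsRowInversion μ F c x ∧ ∀ c' x', IsRowInversion μ F c' x' → F c' ≤ F c := by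
  classical
  let S := (μ.cells ×ˢ μ.cells).filter fun p => IsRowInversion μ F p.1 p.2
  have hmem : ∀ p, p ∈ S ↔ IsRowInversion μ F p.1 p.2 := fun p => by
    simp only [S, mem_filter, mem_product, and_iff_right_iff_imp]
    exact fun hp => ⟨hp.1, hp.2.1⟩
  obtain ⟨p, hp, hmax⟩ := exists_max_image S (fun p => F p.1) ⟨(c, x), (hmem _).2 h⟩
  exact ⟨p.1, p.2, (hmem p).1 hp, fun c' x' h' => hmax (c', x') ((hmem _).2 h')⟩

theorem mem_seCells_of_maximal_rowInversion
    (hcs : ∀ i j : ℕ, (i + 1, j) ∈ μ.cells → F (i, j) < F (i + 1, j))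
    {c x : ℕ × ℕ} (h : IsRowInversion μ F c x)
    (hmax : ∀ c' x', IsRowInversion μ F c' x' → F c' ≤ F c) :
    x ∈ seCells μ F c.1 (F c - 1) := by
  obtain ⟨i, a⟩ := c
  obtain ⟨-, hx, rfl, hcol, hlt⟩ := h
  refine mem_filter.2 ⟨hx, rfl, by omega, fun hxb => ?_⟩
  by_contra! hle
  have hcb : (x.1 + 1, a) ∈ μ := μ.up_left_mem le_rfl hcol.le hxb
  have hvert := hcs x.1 a hcb
  have hbelow := hmax _ _ ⟨hcb, hxb, rfl, hcol, by omega⟩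
  omega

end

theorem stmt16_general (μ : YoungDiagram) (F : ℕ × ℕ → ℕ)
    (hcs : ∀ i j : ℕ, (i + 1, j) ∈ μ.cells → F (i, j) < F (i + 1, j)) :
    (∀ j : ℕ, ∀ c ∈ μ.cells, F c = j + 1 →
        (zcount μ F c : ℤ) = (Tval μ F c.1 j : ℤ) - (Tval μ F (c.1 + 1) (j + 1) : ℤ)) ↔
      (∀ c ∈ μ.cells, (c.1, c.2 + 1) ∈ μ.cells → F c ≤ F (c.1, c.2 + 1)) := by
  constructor
  · intro hSE c₀ hc₀ hnext
    by_contra! hdesc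
    obtain ⟨c, x, hinv, hmax⟩ :=
      exists_maximal_rowInversion (c := c₀) ⟨hc₀, hnext, rfl, Nat.lt_succ_self _, hdesc⟩
    obtain ⟨hc, -, -, hcol, hlt⟩ := id hinv
    have hFc : F c = F c - 1 + 1 := by omega
    have hx := mem_seCells_of_maximal_rowInversion hcs hinv hmax
    have hleft := (zcount_eq_SE_iff hcs hFc).1 (hSE (F c - 1) c hc hFc) x hx
    omega
  · intro hrow j c _ hFc
    refine (zcount_eq_SE_iff hcs hFc).2 fun x hx => ?_
    obtain ⟨i, a⟩ := c
    obtain ⟨b, a'⟩ := x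
    obtain ⟨hxμ, rfl, hxle, -⟩ := mem_filter.1 hx
    by_contra! hcol
    have := le_of_row_le_succ hrow hcol hxμ
    simp only at hFc this hxle
    omega

/-- For a column-strict filling `F` of partition shape with `T = rsort(F)`:
`zcount(c, F) = SE_{ij}(T)` for all `i, j` and all cells `c` in row `i` with
`F c = j + 1`, if and only if `F = T`, i.e. the rows of `F` are already weakly
increasing (so that `F` is a semistandard Young tableau). -/
theorem stmt16 (n : ℕ) (μ : YoungDiagram) (F : ℕ × ℕ → ℕ)
    (hn : ∀ c ∈ μ.cells, 1 ≤ F c ∧ F c ≤ n)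
    (hcs : ∀ i j : ℕ, (i + 1, j) ∈ μ.cells → F (i, j) < F (i + 1, j)) :
    (∀ j : ℕ, ∀ c ∈ μ.cells, F c = j + 1 →
        (zcount μ F c : ℤ) = (Tval μ F c.1 j : ℤ) - (Tval μ F (c.1 + 1) (j + 1) : ℤ)) ↔
      (∀ c ∈ μ.cells, (c.1, c.2 + 1) ∈ μ.cells → F c ≤ F (c.1, c.2 + 1)) :=
  stmt16_general μ F hcs

end Stmt16
end

section
/- Let F be a column-strict filling of partition shape λ, T = rsort(F), and c a cell in row i with F(c) = j+1. Then zcount(c,F) + z̄count(c,F) = SE_{ij}(T), where zcount(c,F) counts quinv-triples with third component c and z̄count(c,F) counts refinv-triples with third component c. -/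
/-! Split the entries `≤ j` of row `i` by the cell `y` below them. If `y` lies outside the
diagram or `F y > j + 1`, the entry is exactly an `x` of a quinv- or refinv-triple ending at `c`
(left or right of `c` according to its column). Otherwise `y` is an entry `≤ j + 1` of row
`i + 1`, and by column strictness every such entry arises this way, once. -/

namespace Stmt17

/-- `T^j_i`: the number of entries `≤ j` in (0-indexed) row `i` of `F`, i.e. the
Gelfand–Tsetlin entry of the pattern associated to `rsort(F)`. -/
def Tval (μ : YoungDiagram) (F : ℕ × ℕ → ℕ) (i j : ℕ) : ℕ :=
  (μ.cells.filter (fun c => c.1 = i ∧ F c ≤ j)).card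

/-- `zcount(c, F)`: the number of quinv-triples `(x, y, z)` of `F` with `z = c`
(`x` in the same row strictly to the left of `c`, `y` directly below `x` in the
augmented diagram, `F x < F c < F y`, `F y = ∞` outside `μ`). -/
def zcount (μ : YoungDiagram) (F : ℕ × ℕ → ℕ) (c : ℕ × ℕ) : ℕ :=
  (μ.cells.filter (fun x => x.1 = c.1 ∧ x.2 < c.2 ∧ F x < F c ∧
    ((x.1 + 1, x.2) ∈ μ.cells → F c < F (x.1 + 1, x.2)))).card

/-- `z̄count(c, F)`: the number of refinv-triples `(x, y, z)` of `F` with `z = c`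
(`x` in the same row strictly to the right of `c`). -/
def zbcount (μ : YoungDiagram) (F : ℕ × ℕ → ℕ) (c : ℕ × ℕ) : ℕ :=
  (μ.cells.filter (fun x => x.1 = c.1 ∧ c.2 < x.2 ∧ F x < F c ∧
    ((x.1 + 1, x.2) ∈ μ.cells → F c < F (x.1 + 1, x.2)))).card

open Finset

theorem zcount_add_zbcount (μ : YoungDiagram) (F : ℕ × ℕ → ℕ) (c : ℕ × ℕ) :
    zcount μ F c + zbcount μ F c =
      #(μ.cells.filter fun x => x.1 = c.1 ∧ F x < F c ∧
        ((x.1 + 1, x.2) ∈ μ.cells → F c < F (x.1 + 1, x.2))) := by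
  rw [zcount, zbcount, ← card_union_of_disjoint, ← filter_or]
  · congr 1
    refine filter_congr fun x _ => ⟨?_, ?_⟩
    · rintro (⟨hrow, -, hlt, hbelow⟩ | ⟨hrow, -, hlt, hbelow⟩) <;> exact ⟨hrow, hlt, hbelow⟩
    · rintro ⟨hrow, hlt, hbelow⟩
      have hcol : x.2 ≠ c.2 := fun hcol => (Prod.ext hrow hcol ▸ hlt).false
      rcases hcol.lt_or_gt with hcol | hcol
      exacts [Or.inl ⟨hrow, hcol, hlt, hbelow⟩, Or.inr ⟨hrow, hcol, hlt, hbelow⟩]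
  · exact disjoint_filter.2 fun x _ h₁ h₂ => h₂.2.1.asymm h₁.2.1

theorem card_filter_below_le_eq_Tval (μ : YoungDiagram) (F : ℕ × ℕ → ℕ) (i m : ℕ) :
    #(μ.cells.filter fun x => x.1 = i ∧ (x.1 + 1, x.2) ∈ μ.cells ∧ F (x.1 + 1, x.2) ≤ m) =
      Tval μ F (i + 1) m := by
  refine card_nbij' (fun x => (x.1 + 1, x.2)) (fun y => (y.1 - 1, y.2)) ?_ ?_ ?_ ?_
  · intro x hx
    simp only [coe_filter, Set.mem_ofPred_eq] at hx ⊢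
    exact ⟨hx.2.2.1, by rw [hx.2.1], hx.2.2.2⟩
  · rintro ⟨y₁, y₂⟩ hy
    simp only [coe_filter, Set.mem_ofPred_eq] at hy ⊢
    obtain ⟨hyμ, rfl, hle⟩ := hy
    exact ⟨μ.up_left_mem (Nat.le_succ i) le_rfl hyμ, rfl, hyμ, hle⟩
  · rintro x -
    simp
  · rintro ⟨y₁, y₂⟩ hy
    simp only [coe_filter, Set.mem_ofPred_eq] at hy
    simp only [Prod.mk.injEq, and_true]
    omega

theorem Tval_eq_card_add_Tval_succ (μ : YoungDiagram) (F : ℕ × ℕ → ℕ)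
    (hcs : ∀ i j : ℕ, (i + 1, j) ∈ μ.cells → F (i, j) < F (i + 1, j)) (i j : ℕ) :
    Tval μ F i j =
      #(μ.cells.filter fun x => x.1 = i ∧ F x ≤ j ∧
        ((x.1 + 1, x.2) ∈ μ.cells → j + 1 < F (x.1 + 1, x.2))) + Tval μ F (i + 1) (j + 1) := by
  rw [Tval, ← card_filter_below_le_eq_Tval, ← card_filter_add_card_filter_not
    (fun x => (x.1 + 1, x.2) ∈ μ.cells ∧ F (x.1 + 1, x.2) ≤ j + 1), filter_filter, filter_filter,
    add_comm]
  congr 2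
  · ext x
    simp only [mem_filter, not_and, not_le, and_assoc]
  · refine filter_congr fun x _ => ⟨?_, ?_⟩
    · rintro ⟨⟨hrow, -⟩, hbelow, hle⟩
      exact ⟨hrow, hbelow, hle⟩
    · rintro ⟨hrow, hbelow, hle⟩
      have hstrict := hcs x.1 x.2 hbelow
      rw [Prod.mk.eta] at hstrict
      exact ⟨⟨hrow, by omega⟩, hbelow, hle⟩

theorem stmt17_general (μ : YoungDiagram) (F : ℕ × ℕ → ℕ)
    (hcs : ∀ i j : ℕ, (i + 1, j) ∈ μ.cells → F (i, j) < F (i + 1, j))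
    (c : ℕ × ℕ) (j : ℕ) (hFc : F c = j + 1) :
    (zcount μ F c : ℤ) + (zbcount μ F c : ℤ) =
      (Tval μ F c.1 j : ℤ) - (Tval μ F (c.1 + 1) (j + 1) : ℤ) := by
  rw [← Nat.cast_add, zcount_add_zbcount, Tval_eq_card_add_Tval_succ μ F hcs, hFc]
  simp only [Nat.lt_add_one_iff, Nat.cast_add, add_sub_cancel_right]

/-- For a column-strict filling `F` of partition shape, `T = rsort(F)`, and a
cell `c` in row `i` with `F c = j + 1`:
`zcount(c, F) + z̄count(c, F) = SE_{ij}(T) = T^j_i − T^{j+1}_{i+1}`. -/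
theorem stmt17 (n : ℕ) (μ : YoungDiagram) (F : ℕ × ℕ → ℕ)
    (hn : ∀ c ∈ μ.cells, 1 ≤ F c ∧ F c ≤ n)
    (hcs : ∀ i j : ℕ, (i + 1, j) ∈ μ.cells → F (i, j) < F (i + 1, j))
    (c : ℕ × ℕ) (hc : c ∈ μ.cells) (j : ℕ) (hFc : F c = j + 1) :
    (zcount μ F c : ℤ) + (zbcount μ F c : ℤ) =
      (Tval μ F c.1 j : ℤ) - (Tval μ F (c.1 + 1) (j + 1) : ℤ) :=
  stmt17_general μ F hcs c j hFc

end Stmt17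
end

section
/- For a column-strict filling F of partition shape λ, Σ_{c ∈ dg(λ)} z̄count(c,F) = inv(F), where z̄count(c,F) is the number of refinv-triples of F whose third component is c; moreover z̄count(c,F) = 0 for all c if and only if F = rsort(F). -/
namespace Stmt18

/-- The descent set of a filling `F` of `μ`. -/
def Des (μ : YoungDiagram) (F : ℕ × ℕ → ℕ) : Finset (ℕ × ℕ) :=
  μ.cells.filter (fun c => 1 ≤ c.1 ∧ F (c.1 - 1, c.2) < F c)

/-- `arm(c)` = number of cells of `μ` strictly to the right of `c` in its row. -/
def arm (μ : YoungDiagram) (c : ℕ × ℕ) : ℕ := μ.rowLen c.1 - c.2 - 1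

/-- Inversions of `F` over the Inv-attack relation. -/
def InvSet (μ : YoungDiagram) (F : ℕ × ℕ → ℕ) : Finset ((ℕ × ℕ) × (ℕ × ℕ)) :=
  (μ.cells ×ˢ μ.cells).filter (fun p =>
    ((p.1.1 = p.2.1 ∧ p.1.2 < p.2.2) ∨ (p.1.1 = p.2.1 + 1 ∧ p.2.2 < p.1.2)) ∧
    F p.2 < F p.1)

/-- `z̄count(c, F)`: the number of refinv-triples `(x, y, z)` of `F` with `z = c`
(`x` in the same row strictly to the right of `c`, `y` directly below `x` in the
augmented diagram, `F x < F c < F y`, with `F y = ∞` outside `μ`). -/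
def zbcount (μ : YoungDiagram) (F : ℕ × ℕ → ℕ) (c : ℕ × ℕ) : ℕ :=
  (μ.cells.filter (fun x => x.1 = c.1 ∧ c.2 < x.2 ∧ F x < F c ∧
    ((x.1 + 1, x.2) ∈ μ.cells → F c < F (x.1 + 1, x.2)))).card

/-! For cells `c` strictly left of `x` in one row, let `y` be the cell below `x`. When
`y ∈ λ`, column-strictness gives `F x < F y`, so in every case
`[F x < F c] + [y ∈ λ ∧ F c < F y] = [(x, y, c) is a refinv-triple] + [y ∈ λ]`.
Summed over all such pairs `(c, x)`, the left side counts `Inv(F)`: same-row inversions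
directly, and adjacent-row inversions `(y, c)` after moving `y` up a row. On the right,
moving `(c, x)` down a row turns `Σ [y ∈ λ]` into `Σ_{u ∈ Des(F)} arm(u)`, since by
column-strictness every cell outside the first row is a descent.

If all `z̄count`s vanish, a row descent `F (i, j+1) < F (i, j)` must be blocked by the cell
below `(i, j+1)`, which then forms a row descent one row further down; this cannot go on
past the bottom of the column. -/

def rowPairs (μ : YoungDiagram) : Finset ((ℕ × ℕ) × (ℕ × ℕ)) :=
  (μ.cells ×ˢ μ.cells).filter (fun p => p.2.1 = p.1.1 ∧ p.1.2 < p.2.2)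

lemma sum_card_filter_eq_card_filter_product {α β : Type*} (s : Finset α) (t : Finset β)
    (p : α → β → Prop) [∀ a b, Decidable (p a b)] :
    ∑ a ∈ s, (t.filter (p a)).card = ((s ×ˢ t).filter (fun q => p q.1 q.2)).card := by
  simp only [Finset.card_filter, Finset.sum_product]

lemma card_filter_right_in_row (μ : YoungDiagram) (u : ℕ × ℕ) :
    (μ.cells.filter (fun v => v.1 = u.1 ∧ u.2 < v.2)).card = arm μ u := by
  have h : μ.cells.filter (fun v => v.1 = u.1 ∧ u.2 < v.2)
      = {u.1} ×ˢ Finset.Ioo u.2 (μ.rowLen u.1) := by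
    ext ⟨a, b⟩
    simp only [Finset.mem_filter, YoungDiagram.mem_cells, Finset.mem_product,
      Finset.mem_singleton, Finset.mem_Ioo]
    constructor
    · rintro ⟨hab, rfl, hb⟩
      exact ⟨rfl, hb, YoungDiagram.mem_iff_lt_rowLen.mp hab⟩
    · rintro ⟨rfl, hb, hlen⟩
      exact ⟨YoungDiagram.mem_iff_lt_rowLen.mpr hlen, rfl, hb⟩
  rw [h, Finset.card_product, Finset.card_singleton, Nat.card_Ioo, one_mul, arm]

lemma sum_zbcount_eq_card (μ : YoungDiagram) (F : ℕ × ℕ → ℕ) :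
    ∑ c ∈ μ.cells, zbcount μ F c = ((rowPairs μ).filter (fun p => F p.2 < F p.1 ∧
      ((p.2.1 + 1, p.2.2) ∈ μ.cells → F p.1 < F (p.2.1 + 1, p.2.2)))).card := by
  simp only [zbcount, sum_card_filter_eq_card_filter_product, rowPairs, Finset.filter_filter,
    and_assoc]

lemma sum_arm_des_eq_card (μ : YoungDiagram) (F : ℕ × ℕ → ℕ)
    (hcs : ∀ i j : ℕ, (i + 1, j) ∈ μ.cells → F (i, j) < F (i + 1, j)) :
    ∑ u ∈ Des μ F, arm μ u
      = ((rowPairs μ).filter (fun p => (p.2.1 + 1, p.2.2) ∈ μ.cells)).card := by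
  simp only [← card_filter_right_in_row, sum_card_filter_eq_card_filter_product]
  refine Finset.card_bij' (fun q _ => ((q.1.1 - 1, q.1.2), (q.2.1 - 1, q.2.2)))
    (fun p _ => ((p.1.1 + 1, p.1.2), (p.2.1 + 1, p.2.2))) ?_ ?_ ?_ ?_
  · rintro ⟨⟨a, b⟩, ⟨c, d⟩⟩ hq
    simp only [Des, rowPairs, Finset.mem_filter, Finset.mem_product,
      YoungDiagram.mem_cells] at hq ⊢
    obtain ⟨⟨⟨hab, ha, -⟩, hcd⟩, rfl, hbd⟩ := hq
    refine ⟨⟨⟨μ.up_left_mem (by omega) le_rfl hab, μ.up_left_mem (by omega) le_rfl hcd⟩,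
      rfl, hbd⟩, ?_⟩
    rwa [Nat.sub_add_cancel ha]
  · rintro ⟨⟨a, b⟩, ⟨c, d⟩⟩ hp
    simp only [Des, rowPairs, Finset.mem_filter, Finset.mem_product,
      YoungDiagram.mem_cells] at hp ⊢
    obtain ⟨⟨-, rfl, hbd⟩, hcd⟩ := hp
    have hab : (c + 1, b) ∈ μ := μ.up_left_mem le_rfl hbd.le hcd
    exact ⟨⟨⟨hab, by omega, hcs c b hab⟩, hcd⟩, rfl, hbd⟩
  · rintro ⟨⟨a, b⟩, ⟨c, d⟩⟩ hq
    simp only [Des, Finset.mem_filter, Finset.mem_product] at hq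
    simp only [Prod.mk.injEq, and_true]
    omega
  · rintro ⟨⟨a, b⟩, ⟨c, d⟩⟩ -
    simp

lemma card_invSet_eq (μ : YoungDiagram) (F : ℕ × ℕ → ℕ) :
    (InvSet μ F).card = ((rowPairs μ).filter (fun p => F p.2 < F p.1)).card
      + ((rowPairs μ).filter (fun p => (p.2.1 + 1, p.2.2) ∈ μ.cells ∧
          F p.1 < F (p.2.1 + 1, p.2.2))).card := by
  have hsplit : InvSet μ F
      = (rowPairs μ).filter (fun p => F p.2 < F p.1)
        ∪ (μ.cells ×ˢ μ.cells).filter (fun q => (q.1.1 = q.2.1 + 1 ∧ q.2.2 < q.1.2) ∧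
          F q.2 < F q.1) := by
    rw [rowPairs, Finset.filter_filter, ← Finset.filter_or, InvSet]
    exact Finset.filter_congr fun q _ => by omega
  rw [hsplit, Finset.card_union_of_disjoint]
  · congr 1
    refine Finset.card_bij' (fun q _ => (q.2, (q.1.1 - 1, q.1.2)))
      (fun p _ => ((p.2.1 + 1, p.2.2), p.1)) ?_ ?_ ?_ ?_
    · rintro ⟨⟨a, b⟩, ⟨c, d⟩⟩ hq
      simp only [rowPairs, Finset.mem_filter, Finset.mem_product,
        YoungDiagram.mem_cells] at hq ⊢
      obtain ⟨⟨hab, hcd⟩, ⟨rfl, hdb⟩, hlt⟩ := hq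
      exact ⟨⟨⟨hcd, μ.up_left_mem (by omega) le_rfl hab⟩, rfl, hdb⟩, hab, hlt⟩
    · rintro ⟨⟨a, b⟩, ⟨c, d⟩⟩ hp
      simp only [rowPairs, Finset.mem_filter, Finset.mem_product,
        YoungDiagram.mem_cells] at hp ⊢
      obtain ⟨⟨⟨hab, -⟩, rfl, hbd⟩, hcd, hlt⟩ := hp
      exact ⟨⟨hcd, hab⟩, ⟨rfl, hbd⟩, hlt⟩
    · rintro ⟨⟨a, b⟩, ⟨c, d⟩⟩ hq
      simp only [Finset.mem_filter, Finset.mem_product] at hq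
      simp only [Prod.mk.injEq, and_true]
      omega
    · rintro ⟨⟨a, b⟩, ⟨c, d⟩⟩ -
      simp
  · rw [Finset.disjoint_left]
    rintro q hrow hadj
    simp only [rowPairs, Finset.mem_filter] at hrow hadj
    omega

lemma boole_add_boole_eq {a b c : ℕ} (P : Prop) [Decidable P] (h : P → a < c) :
    ((if a < b then 1 else 0) + if P ∧ b < c then 1 else 0)
      = (if a < b ∧ (P → b < c) then 1 else 0) + if P then 1 else 0 := by
  by_cases hP : P
  · have := h hP
    simp only [hP, true_and, true_implies, if_true]
    split_ifs <;> omega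
  · simp [hP]

theorem sum_zbcount_add_sum_arm_des (μ : YoungDiagram) (F : ℕ × ℕ → ℕ)
    (hcs : ∀ i j : ℕ, (i + 1, j) ∈ μ.cells → F (i, j) < F (i + 1, j)) :
    ∑ c ∈ μ.cells, zbcount μ F c + ∑ u ∈ Des μ F, arm μ u = (InvSet μ F).card := by
  rw [sum_zbcount_eq_card, sum_arm_des_eq_card μ F hcs, card_invSet_eq]
  simp only [Finset.card_filter, ← Finset.sum_add_distrib]
  exact Finset.sum_congr rfl fun p _ => (boole_add_boole_eq _ (hcs p.2.1 p.2.2)).symm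

lemma below_mem_of_zbcount_eq_zero {μ : YoungDiagram} {F : ℕ × ℕ → ℕ} {i j k : ℕ}
    (hz : zbcount μ F (i, j) = 0) (hk : (i, k) ∈ μ.cells) (hjk : j < k)
    (hlt : F (i, k) < F (i, j)) :
    (i + 1, k) ∈ μ.cells ∧ F (i + 1, k) ≤ F (i, j) := by
  rw [zbcount, Finset.card_eq_zero, Finset.filter_eq_empty_iff] at hz
  by_contra hblock
  exact hz hk ⟨rfl, hjk, hlt, fun hmem => lt_of_not_ge fun hle => hblock ⟨hmem, hle⟩⟩

theorem le_of_zbcount_eq_zero {μ : YoungDiagram} {F : ℕ × ℕ → ℕ}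
    (hcs : ∀ i j : ℕ, (i + 1, j) ∈ μ.cells → F (i, j) < F (i + 1, j))
    (hz : ∀ c ∈ μ.cells, zbcount μ F c = 0) {i j : ℕ} (hij : (i, j + 1) ∈ μ.cells) :
    F (i, j) ≤ F (i, j + 1) := by
  by_contra! hlt
  have hc : (i, j) ∈ μ.cells := μ.up_left_mem le_rfl j.le_succ hij
  obtain ⟨hbelow, hle⟩ := below_mem_of_zbcount_eq_zero (hz _ hc) hij j.lt_succ_self hlt
  have hdescent : F (i + 1, j + 1) < F (i + 1, j) :=
    hle.trans_lt (hcs i j (μ.up_left_mem le_rfl j.le_succ hbelow))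
  exact (le_of_zbcount_eq_zero hcs hz hbelow).not_gt hdescent
termination_by μ.colLen (j + 1) - i
decreasing_by
  have := YoungDiagram.mem_iff_lt_colLen.mp hbelow
  omega

lemma le_of_rows_monotone {μ : YoungDiagram} {F : ℕ × ℕ → ℕ}
    (hrow : ∀ c ∈ μ.cells, (c.1, c.2 + 1) ∈ μ.cells → F c ≤ F (c.1, c.2 + 1))
    {i j k : ℕ} (hjk : j ≤ k) (hk : (i, k) ∈ μ.cells) : F (i, j) ≤ F (i, k) := by
  induction k, hjk using Nat.le_induction with
  | base => rfl
  | succ k _ ih =>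
    have hk' : (i, k) ∈ μ.cells := μ.up_left_mem le_rfl k.le_succ hk
    exact (ih hk').trans (hrow _ hk' hk)

lemma zbcount_eq_zero_of_rows_monotone {μ : YoungDiagram} {F : ℕ × ℕ → ℕ}
    (hrow : ∀ c ∈ μ.cells, (c.1, c.2 + 1) ∈ μ.cells → F c ≤ F (c.1, c.2 + 1))
    (c : ℕ × ℕ) : zbcount μ F c = 0 := by
  rw [zbcount, Finset.card_eq_zero, Finset.filter_eq_empty_iff]
  rintro ⟨a, b⟩ hx ⟨rfl, hcb, hlt, -⟩
  exact (le_of_rows_monotone hrow hcb.le hx).not_gt hlt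

theorem stmt18_general (μ : YoungDiagram) (F : ℕ × ℕ → ℕ)
    (hcs : ∀ i j : ℕ, (i + 1, j) ∈ μ.cells → F (i, j) < F (i + 1, j)) :
    ((∑ c ∈ μ.cells, (zbcount μ F c : ℤ)) =
      ((InvSet μ F).card : ℤ) - ∑ u ∈ Des μ F, (arm μ u : ℤ)) ∧
    ((∀ c ∈ μ.cells, zbcount μ F c = 0) ↔
      (∀ c ∈ μ.cells, (c.1, c.2 + 1) ∈ μ.cells → F c ≤ F (c.1, c.2 + 1))) := by
  refine ⟨?_, fun hz _ _ hnext => le_of_zbcount_eq_zero hcs hz hnext,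
    fun hrow c _ => zbcount_eq_zero_of_rows_monotone hrow c⟩
  rw [eq_sub_iff_add_eq]
  exact_mod_cast sum_zbcount_add_sum_arm_des μ F hcs

/-- For a column-strict filling `F` of partition shape,
`Σ_{c ∈ dg(λ)} z̄count(c, F) = inv(F) = |Inv(F)| − Σ_{u ∈ Des(F)} arm(u)`;
moreover `z̄count(c, F) = 0` for all `c` iff `F = rsort(F)`, i.e. the rows of
`F` are weakly increasing. -/
theorem stmt18 (n : ℕ) (μ : YoungDiagram) (F : ℕ × ℕ → ℕ)
    (hn : ∀ c ∈ μ.cells, 1 ≤ F c ∧ F c ≤ n)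
    (hcs : ∀ i j : ℕ, (i + 1, j) ∈ μ.cells → F (i, j) < F (i + 1, j)) :
    ((∑ c ∈ μ.cells, (zbcount μ F c : ℤ)) =
      ((InvSet μ F).card : ℤ) - ∑ u ∈ Des μ F, (arm μ u : ℤ)) ∧
    ((∀ c ∈ μ.cells, zbcount μ F c = 0) ↔
      (∀ c ∈ μ.cells, (c.1, c.2 + 1) ∈ μ.cells → F c ≤ F (c.1, c.2 + 1))) :=
  stmt18_general μ F hcs

end Stmt18
end

section
/- Let F be a column-strict filling of partition shape λ with entries in [n], and let F† be the filling of column-composition shape obtained by deleting the cells of F containing n. Then applying any sequence of elementary splice operations to adjacent columns (σ^(j), σ^(j+1)) with len(σ^(j+1)) > len(σ^(j)) until the shape becomes a partition produces the same column-strict filling dsplice(F), independent of the choices made; and the shape μ of dsplice(F) interlaces λ, i.e., λ_i ≥ μ_i ≥ λ_{i+1} for all i. -/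
/-!
Every column of `F` is strictly increasing, so deleting the entries `n` removes at most one cell
per column, and the invariant "each column of `G` has the length of the corresponding column of `F`
or one less" survives every splice: if column `j` of `G` is shorter than column `j + 1`, the
invariant and `λ'_j ≥ λ'_{j+1}` force column `j` to be short, column `j + 1` to be full and
`λ'_j = λ'_{j+1}`, and the splice just exchanges the two lengths. Hence two different admissible
splices sit at positions at least two apart and commute, so the splice relation has the diamond
property on the reachable fillings and is confluent; a partition shape admits no splice, so
it is the unique normal form. Interlacing is the invariant read row by row, and column
strictness holds because the splice point is chosen so that both new columns increase.
-/

namespace Stmt19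

/-- 0-indexed splice point for column tuples `σ` (shorter) and `τ`:
`m − 1`, where `m = max {1 ≤ i ≤ k+1 : σ_{i−1} < τ_i}` with `σ_0 = 0`. -/
def spliceIdx (σ τ : List ℕ) : ℕ :=
  ((Finset.range (σ.length + 1)).filter
    (fun j => (if j = 0 then 0 else σ.getD (j - 1) 0) < τ.getD j 0)).sup id

/-- Elementary splice for `σ` shorter than `τ`: swap suffixes at the splice point. -/
def splicePair (σ τ : List ℕ) : List ℕ × List ℕ :=
  (σ.take (spliceIdx σ τ) ++ τ.drop (spliceIdx σ τ),
   τ.take (spliceIdx σ τ) ++ σ.drop (spliceIdx σ τ))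

/-- The splice operation on an arbitrary pair of column tuples. -/
def splice (p : List ℕ × List ℕ) : List ℕ × List ℕ :=
  if p.1.length < p.2.length then splicePair p.1 p.2
  else if p.2.length < p.1.length then (splicePair p.2 p.1).swap
  else p

/-- One step of the delete-and-splice rectification: pick a (0-indexed) column
`j` whose length is smaller than that of column `j+1`, and apply the elementary
splice to columns `j`, `j+1`. `G` is a filling presented as its list of columns
(each column read top to bottom). -/
def Step (G G' : List (List ℕ)) : Prop :=
  ∃ j, j + 1 < G.length ∧
    (G.getD j []).length < (G.getD (j + 1) []).length ∧
    G' = (G.set j (splice (G.getD j [], G.getD (j + 1) [])).1).set (j + 1)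
          (splice (G.getD j [], G.getD (j + 1) [])).2

/-- The shape is a partition: column lengths weakly decrease left to right. -/
def IsPartitionShape (G : List (List ℕ)) : Prop :=
  ∀ j, j + 1 < G.length → (G.getD (j + 1) []).length ≤ (G.getD j []).length

/-- The length of the `i`-th row (`i` 1-indexed) of the shape with columns `G`. -/
def rowLength (G : List (List ℕ)) (i : ℕ) : ℕ :=
  (G.map List.length).countP (fun m => decide (i ≤ m))

open Relation

theorem join_of_diamond_on {α : Type*} {r : α → α → Prop} {P : α → Prop}
    (hP : ∀ ⦃a b⦄, P a → r a b → P b)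
    (hr : ∀ ⦃a b c⦄, P a → r a b → r a c → b = c ∨ ∃ d, r b d ∧ r c d)
    {a b c : α} (ha : P a) (hab : ReflTransGen r a b) (hac : ReflTransGen r a c) :
    Join (ReflTransGen r) b c := by
  let r' : α → α → Prop := fun x y => P x ∧ r x y
  have restrict : ∀ {y}, ReflTransGen r a y → P y ∧ ReflTransGen r' a y := by
    intro y h
    induction h with
    | refl => exact ⟨ha, .refl⟩
    | tail _ hyz ih => exact ⟨hP ih.1 hyz, ih.2.tail ⟨ih.1, hyz⟩⟩
  have diamond : ∀ x y z, r' x y → r' x z → ∃ w, ReflGen r' y w ∧ ReflTransGen r' z w := by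
    rintro x y z ⟨hx, hxy⟩ ⟨-, hxz⟩
    rcases hr hx hxy hxz with rfl | ⟨w, hyw, hzw⟩
    · exact ⟨y, .refl, .refl⟩
    · exact ⟨w, .single ⟨hP hx hxy, hyw⟩, .single ⟨hP hx hxz, hzw⟩⟩
  obtain ⟨d, hbd, hcd⟩ := church_rosser diamond (restrict hab).2 (restrict hac).2
  exact ⟨d, hbd.lift id fun _ _ h => h.2, hcd.lift id fun _ _ h => h.2⟩

theorem pairwise_lt_take_append_drop {α : Type*} [LinearOrder α] {l₁ l₂ : List α}
    (h₁ : l₁.Pairwise (· < ·)) (h₂ : l₂.Pairwise (· < ·)) {m : ℕ} (hm₁ : m ≤ l₁.length)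
    (hm : ∀ (_ : 0 < m) (_ : m < l₂.length), l₁[m - 1] < l₂[m]) :
    (l₁.take m ++ l₂.drop m).Pairwise (· < ·) := by
  refine List.pairwise_append.mpr
    ⟨h₁.sublist (List.take_sublist _ _), h₂.sublist (List.drop_sublist _ _), ?_⟩
  intro a ha b hb
  obtain ⟨i, hi, rfl⟩ := List.mem_iff_getElem.mp ha
  obtain ⟨k, hk, rfl⟩ := List.mem_iff_getElem.mp hb
  simp only [List.length_take, List.length_drop] at hi hk
  simp only [List.getElem_take, List.getElem_drop]
  have s₁ := List.sortedLT_iff_pairwise.mpr h₁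
  have s₂ := List.sortedLT_iff_pairwise.mpr h₂
  calc l₁[i] ≤ l₁[m - 1]'(by omega) := s₁.getElem_le_getElem_iff.mpr (by omega)
    _ < l₂[m]'(by omega) := hm (by omega) (by omega)
    _ ≤ l₂[m + k] := s₂.getElem_le_getElem_iff.mpr (by omega)

def spliceCandidates (σ τ : List ℕ) : Finset ℕ :=
  (Finset.range (σ.length + 1)).filter
    (fun j => (if j = 0 then 0 else σ.getD (j - 1) 0) < τ.getD j 0)

theorem mem_spliceCandidates {σ τ : List ℕ} {j : ℕ} : j ∈ spliceCandidates σ τ ↔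
    j ≤ σ.length ∧ (if j = 0 then 0 else σ.getD (j - 1) 0) < τ.getD j 0 := by
  simp [spliceCandidates]

theorem spliceIdx_eq_sup (σ τ : List ℕ) : spliceIdx σ τ = (spliceCandidates σ τ).sup id := rfl

theorem spliceIdx_le (σ τ : List ℕ) : spliceIdx σ τ ≤ σ.length :=
  Finset.sup_le fun _ hj => (mem_spliceCandidates.mp hj).1

theorem spliceIdx_mem_spliceCandidates (σ : List ℕ) {τ : List ℕ} (hτ : 0 < τ.getD 0 0) :
    spliceIdx σ τ ∈ spliceCandidates σ τ := by
  obtain ⟨m, hm, hsup⟩ := Finset.exists_mem_eq_sup (spliceCandidates σ τ)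
    ⟨0, mem_spliceCandidates.mpr ⟨Nat.zero_le _, by rwa [if_pos rfl]⟩⟩ id
  rwa [spliceIdx_eq_sup, hsup]

theorem getD_le_getD_of_spliceIdx_lt {σ τ : List ℕ} {j : ℕ} (hj : j ≤ σ.length)
    (hlt : spliceIdx σ τ < j) : τ.getD j 0 ≤ σ.getD (j - 1) 0 := by
  by_contra! h
  have := Finset.le_sup (f := id) (mem_spliceCandidates.mpr ⟨hj, by rwa [if_neg (by omega)]⟩)
  exact absurd this (not_le.mpr hlt)

section SplicePair

variable {σ τ : List ℕ}

theorem splicePair_fst_length (hlen : σ.length < τ.length) :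
    (splicePair σ τ).1.length = τ.length := by
  have := spliceIdx_le σ τ
  simp only [splicePair, List.length_append, List.length_take, List.length_drop]
  omega

theorem splicePair_snd_length (hlen : σ.length < τ.length) :
    (splicePair σ τ).2.length = σ.length := by
  have := spliceIdx_le σ τ
  simp only [splicePair, List.length_append, List.length_take, List.length_drop]
  omega

theorem splicePair_fst_pairwise (hσ : σ.Pairwise (· < ·)) (hτ : τ.Pairwise (· < ·))
    (hτ₀ : 0 < τ.getD 0 0) :
    (splicePair σ τ).1.Pairwise (· < ·) := by
  refine pairwise_lt_take_append_drop hσ hτ (spliceIdx_le σ τ) fun hm₀ hmτ => ?_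
  have h := (mem_spliceCandidates.mp (spliceIdx_mem_spliceCandidates σ hτ₀)).2
  have hmσ := spliceIdx_le σ τ
  rwa [if_neg (by omega), List.getD_eq_getElem _ _ (by omega),
    List.getD_eq_getElem _ _ hmτ] at h

theorem splicePair_snd_pairwise (hσ : σ.Pairwise (· < ·)) (hτ : τ.Pairwise (· < ·))
    (hlen : σ.length < τ.length) : (splicePair σ τ).2.Pairwise (· < ·) := by
  refine pairwise_lt_take_append_drop hτ hσ (by have := spliceIdx_le σ τ; omega)
    fun hm₀ hmσ => ?_
  have h := getD_le_getD_of_spliceIdx_lt (τ := τ) (j := spliceIdx σ τ + 1) hmσ (by omega)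
  rw [List.getD_eq_getElem _ _ (by omega), Nat.add_sub_cancel,
    List.getD_eq_getElem _ _ hmσ] at h
  have s := List.sortedLT_iff_pairwise.mpr hτ
  exact lt_of_lt_of_le (s.getElem_lt_getElem_iff.mpr (by omega)) h

theorem mem_of_mem_splicePair {x : ℕ}
    (hx : x ∈ (splicePair σ τ).1 ∨ x ∈ (splicePair σ τ).2) : x ∈ σ ∨ x ∈ τ := by
  simp only [splicePair, List.mem_append] at hx
  rcases hx with (h | h) | (h | h)
  · exact .inl (List.mem_of_mem_take h)
  · exact .inr (List.mem_of_mem_drop h)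
  · exact .inr (List.mem_of_mem_take h)
  · exact .inl (List.mem_of_mem_drop h)

end SplicePair

def stepAt (G : List (List ℕ)) (j : ℕ) : List (List ℕ) :=
  (G.set j (splicePair (G.getD j []) (G.getD (j + 1) [])).1).set (j + 1)
    (splicePair (G.getD j []) (G.getD (j + 1) [])).2

theorem step_iff {G G' : List (List ℕ)} : Step G G' ↔ ∃ j, j + 1 < G.length ∧
    (G.getD j []).length < (G.getD (j + 1) []).length ∧ G' = stepAt G j := by
  refine exists_congr fun j => and_congr_right fun _ => and_congr_right fun hlt => ?_
  simp only [stepAt, splice, hlt, if_true]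

section StepAt

variable {G : List (List ℕ)} {i j : ℕ}

theorem length_stepAt : (stepAt G j).length = G.length := by
  simp [stepAt]

theorem getD_stepAt_self (hj : j + 1 < G.length) :
    (stepAt G j).getD j [] = (splicePair (G.getD j []) (G.getD (j + 1) [])).1 := by
  simp [stepAt, List.getD_eq_getElem?_getD, show j < G.length by omega]

theorem getD_stepAt_succ (hj : j + 1 < G.length) :
    (stepAt G j).getD (j + 1) [] = (splicePair (G.getD j []) (G.getD (j + 1) [])).2 := by
  simp [stepAt, List.getD_eq_getElem?_getD, hj]

theorem getD_stepAt_of_ne (h₀ : i ≠ j) (h₁ : i ≠ j + 1) : (stepAt G j).getD i [] = G.getD i [] := by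
  simp [stepAt, List.getD_eq_getElem?_getD, h₀.symm, h₁.symm]

theorem mem_stepAt {col : List ℕ} (h : col ∈ stepAt G j) : col ∈ G ∨
    col = (splicePair (G.getD j []) (G.getD (j + 1) [])).1 ∨
    col = (splicePair (G.getD j []) (G.getD (j + 1) [])).2 := by
  rcases List.mem_or_eq_of_mem_set h with h | h
  · rcases List.mem_or_eq_of_mem_set h with h | h
    · exact .inl h
    · exact .inr (.inl h)
  · exact .inr (.inr h)

end StepAt

theorem stepAt_comm_of_add_two_le {G : List (List ℕ)} {j₁ j₂ : ℕ} (h : j₁ + 2 ≤ j₂) :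
    stepAt (stepAt G j₁) j₂ = stepAt (stepAt G j₂) j₁ := by
  have e₁ : (stepAt G j₁).getD j₂ [] = G.getD j₂ [] := getD_stepAt_of_ne (by omega) (by omega)
  have e₂ : (stepAt G j₁).getD (j₂ + 1) [] = G.getD (j₂ + 1) [] :=
    getD_stepAt_of_ne (by omega) (by omega)
  have e₃ : (stepAt G j₂).getD j₁ [] = G.getD j₁ [] := getD_stepAt_of_ne (by omega) (by omega)
  have e₄ : (stepAt G j₂).getD (j₁ + 1) [] = G.getD (j₁ + 1) [] :=
    getD_stepAt_of_ne (by omega) (by omega)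
  rw [stepAt, e₁, e₂, stepAt.eq_1 (stepAt G j₂), e₃, e₄]
  simp only [stepAt]
  rw [List.set_comm _ _ (by omega : j₁ + 1 ≠ j₂), List.set_comm _ _ (by omega : j₁ ≠ j₂),
    List.set_comm _ _ (by omega : j₁ + 1 ≠ j₂ + 1), List.set_comm _ _ (by omega : j₁ ≠ j₂ + 1)]

theorem stepAt_comm {G : List (List ℕ)} {j₁ j₂ : ℕ} (h : j₁ + 2 ≤ j₂ ∨ j₂ + 2 ≤ j₁) :
    stepAt (stepAt G j₁) j₂ = stepAt (stepAt G j₂) j₁ :=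
  h.elim stepAt_comm_of_add_two_le fun h => (stepAt_comm_of_add_two_le h).symm

theorem step_stepAt_of_far {G : List (List ℕ)} {j₁ j₂ : ℕ} (h : j₁ + 2 ≤ j₂ ∨ j₂ + 2 ≤ j₁)
    (hj₂ : j₂ + 1 < G.length) (hlt₂ : (G.getD j₂ []).length < (G.getD (j₂ + 1) []).length) :
    Step (stepAt G j₁) (stepAt (stepAt G j₁) j₂) := by
  have e₀ : (stepAt G j₁).getD j₂ [] = G.getD j₂ [] := getD_stepAt_of_ne (by omega) (by omega)
  have e₁ : (stepAt G j₁).getD (j₂ + 1) [] = G.getD (j₂ + 1) [] :=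
    getD_stepAt_of_ne (by omega) (by omega)
  exact step_iff.mpr ⟨j₂, by rwa [length_stepAt], by rwa [e₀, e₁], rfl⟩

theorem eq_of_reflTransGen_step {G H : List (List ℕ)} (hG : IsPartitionShape G)
    (h : ReflTransGen Step G H) : H = G := by
  rcases h.cases_head with h | ⟨_, ⟨j, hj, hlt, -⟩, -⟩
  · exact h.symm
  · exact absurd (hG j hj) (not_le.mpr hlt)

theorem getD_mem_of_lt {G : List (List ℕ)} {j : ℕ} (hj : j < G.length) : G.getD j [] ∈ G := by
  rw [List.getD_eq_getElem _ _ hj]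
  exact List.getElem_mem hj

def IsColumnStrict (m : ℕ) (G : List (List ℕ)) : Prop :=
  ∀ col ∈ G, col.Pairwise (· < ·) ∧ ∀ x ∈ col, 1 ≤ x ∧ x ≤ m

theorem IsColumnStrict.step {m : ℕ} {G G' : List (List ℕ)} (hG : IsColumnStrict m G)
    (h : Step G G') : IsColumnStrict m G' := by
  obtain ⟨j, hj, hlt, rfl⟩ := step_iff.mp h
  obtain ⟨hσ, hσb⟩ := hG _ (getD_mem_of_lt (j := j) (by omega))
  obtain ⟨hτ, hτb⟩ := hG _ (getD_mem_of_lt hj)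
  have hτ₀ : 0 < (G.getD (j + 1) []).getD 0 0 := by
    have hpos : 0 < (G.getD (j + 1) []).length := by omega
    rw [List.getD_eq_getElem _ _ hpos]
    exact (hτb _ (List.getElem_mem hpos)).1
  have hbound : ∀ x, x ∈ G.getD j [] ∨ x ∈ G.getD (j + 1) [] → 1 ≤ x ∧ x ≤ m :=
    fun x hx => hx.elim (hσb x) (hτb x)
  intro col hcol
  rcases mem_stepAt hcol with hcol | rfl | rfl
  · exact hG col hcol
  · exact ⟨splicePair_fst_pairwise hσ hτ hτ₀,
      fun x hx => hbound x (mem_of_mem_splicePair (.inl hx))⟩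
  · exact ⟨splicePair_snd_pairwise hσ hτ hlt,
      fun x hx => hbound x (mem_of_mem_splicePair (.inr hx))⟩

def ColumnsShrinkByAtMostOne (F G : List (List ℕ)) : Prop :=
  G.length = F.length ∧ ∀ j, (F.getD j []).length - 1 ≤ (G.getD j []).length ∧
    (G.getD j []).length ≤ (F.getD j []).length

namespace ColumnsShrinkByAtMostOne

variable {F G : List (List ℕ)}

theorem lengths_of_lt (hF : IsPartitionShape F) (hG : ColumnsShrinkByAtMostOne F G) {j : ℕ}
    (hj : j + 1 < G.length) (hlt : (G.getD j []).length < (G.getD (j + 1) []).length) :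
    (G.getD j []).length + 1 = (F.getD j []).length ∧
      (G.getD (j + 1) []).length = (F.getD (j + 1) []).length ∧
      (F.getD (j + 1) []).length = (F.getD j []).length := by
  have := hG.1
  have := hG.2 j
  have := hG.2 (j + 1)
  have := hF j (by omega)
  omega

theorem step (hF : IsPartitionShape F) (hG : ColumnsShrinkByAtMostOne F G) {G' : List (List ℕ)}
    (h : Step G G') : ColumnsShrinkByAtMostOne F G' := by
  obtain ⟨j, hj, hlt, rfl⟩ := step_iff.mp h
  have hlen := hG.lengths_of_lt hF hj hlt
  refine ⟨length_stepAt.trans hG.1, fun i => ?_⟩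
  rcases eq_or_ne i j with rfl | hi₀
  · rw [getD_stepAt_self hj, splicePair_fst_length hlt]
    omega
  rcases eq_or_ne i (j + 1) with rfl | hi₁
  · rw [getD_stepAt_succ hj, splicePair_snd_length hlt]
    omega
  rw [getD_stepAt_of_ne hi₀ hi₁]
  exact hG.2 i

theorem step_diamond (hF : IsPartitionShape F) (hG : ColumnsShrinkByAtMostOne F G)
    {G₁ G₂ : List (List ℕ)} (h₁ : Step G G₁) (h₂ : Step G G₂) :
    G₁ = G₂ ∨ ∃ H, Step G₁ H ∧ Step G₂ H := by
  obtain ⟨j₁, hj₁, hlt₁, rfl⟩ := step_iff.mp h₁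
  obtain ⟨j₂, hj₂, hlt₂, rfl⟩ := step_iff.mp h₂
  rcases eq_or_ne j₁ j₂ with rfl | hne
  · exact .inl rfl
  have := hG.lengths_of_lt hF hj₁ hlt₁
  have := hG.lengths_of_lt hF hj₂ hlt₂
  have hfar : j₁ + 2 ≤ j₂ ∨ j₂ + 2 ≤ j₁ := by
    rcases (by omega : j₂ = j₁ + 1 ∨ j₁ = j₂ + 1 ∨ j₁ + 2 ≤ j₂ ∨ j₂ + 2 ≤ j₁) with h | h | h
    · subst h; omega
    · subst h; omega
    · exact h
  refine .inr ⟨stepAt (stepAt G j₁) j₂, step_stepAt_of_far hfar hj₂ hlt₂, ?_⟩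
  rw [stepAt_comm hfar]
  exact step_stepAt_of_far hfar.symm hj₁ hlt₁

end ColumnsShrinkByAtMostOne

theorem rowLength_add_le_rowLength {G H : List (List ℕ)} (hlen : G.length = H.length) {k : ℕ}
    (h : ∀ j, (G.getD j []).length ≤ (H.getD j []).length + k) (i : ℕ) :
    rowLength G (i + k) ≤ rowLength H i := by
  induction G generalizing H with
  | nil => simp [rowLength]
  | cons a G ih =>
    obtain _ | ⟨b, H⟩ := H
    · simp at hlen
    have h₀ := h 0
    have ih := ih (H := H) (by simpa using hlen) fun j => h (j + 1)
    simp only [List.getD_cons_zero] at h₀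
    simp only [rowLength, List.map_cons, List.countP_cons] at ih ⊢
    split_ifs <;> simp_all <;> omega

theorem columnsShrinkByAtMostOne_map_filter_ne {F : List (List ℕ)}
    (hF : ∀ col ∈ F, col.Nodup) (n : ℕ) :
    ColumnsShrinkByAtMostOne F (F.map fun col => col.filter fun x => decide (x ≠ n)) := by
  refine ⟨List.length_map _, fun j => ?_⟩
  have hmap : (F.map fun col => col.filter fun x => decide (x ≠ n)).getD j [] =
      (F.getD j []).filter fun x => decide (x ≠ n) := List.getD_map F [] _
  have hnodup : (F.getD j []).Nodup := by
    rcases lt_or_ge j F.length with hj | hj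
    · exact hF _ (getD_mem_of_lt hj)
    · rw [List.getD_eq_default _ _ hj]
      exact List.nodup_nil
  have herase : ((F.getD j []).filter fun x => decide (x ≠ n)) = (F.getD j []).erase n := by
    rw [hnodup.erase_eq_filter]
    exact List.filter_congr fun x _ => by rw [Bool.eq_iff_iff]; simp
  rw [hmap, herase, List.length_erase]
  split_ifs <;> omega

theorem IsColumnStrict.map_filter_ne {n : ℕ} {F : List (List ℕ)} (hF : IsColumnStrict n F) :
    IsColumnStrict (n - 1) (F.map fun col => col.filter fun x => decide (x ≠ n)) := by
  simp only [IsColumnStrict, List.mem_map]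
  rintro _ ⟨col, hcol, rfl⟩
  refine ⟨(hF col hcol).1.sublist List.filter_sublist, fun x hx => ?_⟩
  obtain ⟨hx, hxn⟩ := List.mem_filter.mp hx
  have := (hF col hcol).2 x hx
  simp only [decide_eq_true_eq] at hxn
  omega

theorem stmt19_general (n : ℕ) (F : List (List ℕ))
    (hcols : ∀ col ∈ F, col.Pairwise (· < ·) ∧ ∀ x ∈ col, 1 ≤ x ∧ x ≤ n)
    (hshape : IsPartitionShape F) :
    (∀ G G',
      Relation.ReflTransGen Step (F.map (fun col => col.filter (fun x => decide (x ≠ n)))) G →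
      Relation.ReflTransGen Step (F.map (fun col => col.filter (fun x => decide (x ≠ n)))) G' →
      IsPartitionShape G → IsPartitionShape G' → G = G') ∧
    (∀ G,
      Relation.ReflTransGen Step (F.map (fun col => col.filter (fun x => decide (x ≠ n)))) G →
      IsPartitionShape G →
      (∀ col ∈ G, col.Pairwise (· < ·) ∧ ∀ x ∈ col, 1 ≤ x ∧ x ≤ n - 1) ∧
      (∀ i, 1 ≤ i → rowLength G i ≤ rowLength F i ∧ rowLength F (i + 1) ≤ rowLength G i)) := by
  have hstart := columnsShrinkByAtMostOne_map_filter_ne (fun col hcol => (hcols col hcol).1.nodup) n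
  have hreach : ∀ G, ReflTransGen Step (F.map fun col => col.filter fun x => decide (x ≠ n)) G →
      ColumnsShrinkByAtMostOne F G ∧ IsColumnStrict (n - 1) G := by
    intro G hG
    induction hG with
    | refl => exact ⟨hstart, IsColumnStrict.map_filter_ne hcols⟩
    | tail _ hstep ih => exact ⟨ih.1.step hshape hstep, ih.2.step hstep⟩
  refine ⟨fun G G' hG hG' hpG hpG' => ?_, fun G hG _ => ?_⟩
  · obtain ⟨H, hGH, hG'H⟩ := join_of_diamond_on (fun _ _ h hs => h.step hshape hs)
      (fun _ _ _ h => h.step_diamond hshape) hstart hG hG'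
    rw [← eq_of_reflTransGen_step hpG hGH, ← eq_of_reflTransGen_step hpG' hG'H]
  · obtain ⟨⟨hlen, hcol⟩, hstrict⟩ := hreach G hG
    refine ⟨hstrict, fun i _ => ⟨?_, ?_⟩⟩
    · exact rowLength_add_le_rowLength (k := 0) hlen (fun j => (hcol j).2) i
    · exact rowLength_add_le_rowLength hlen.symm (fun j => Nat.sub_le_iff_le_add.mp (hcol j).1) i

/-- Let `F` be a column-strict filling of partition shape `λ` with entries in
`[n]` (presented as its list of columns), and let `F†` be obtained by deleting
all entries equal to `n`. Then any sequence of elementary splice steps from `F†`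
terminating in a partition shape yields the same filling `dsplice(F)`
(independent of choices); it is column strict with entries in `[n−1]`, and its
shape `μ` interlaces `λ`: `λ_i ≥ μ_i ≥ λ_{i+1}` for all `i`. -/
theorem stmt19 (n : ℕ) (hn : 1 ≤ n) (F : List (List ℕ))
    (hcols : ∀ col ∈ F, col.Pairwise (· < ·) ∧ ∀ x ∈ col, 1 ≤ x ∧ x ≤ n)
    (hshape : IsPartitionShape F) :
    (∀ G G',
      Relation.ReflTransGen Step (F.map (fun col => col.filter (fun x => decide (x ≠ n)))) G →
      Relation.ReflTransGen Step (F.map (fun col => col.filter (fun x => decide (x ≠ n)))) G' →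
      IsPartitionShape G → IsPartitionShape G' → G = G') ∧
    (∀ G,
      Relation.ReflTransGen Step (F.map (fun col => col.filter (fun x => decide (x ≠ n)))) G →
      IsPartitionShape G →
      (∀ col ∈ G, col.Pairwise (· < ·) ∧ ∀ x ∈ col, 1 ≤ x ∧ x ≤ n - 1) ∧
      (∀ i, 1 ≤ i → rowLength G i ≤ rowLength F i ∧ rowLength F (i + 1) ≤ rowLength G i)) :=
  stmt19_general n F hcols hshape

end Stmt19
end
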